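/- arXiv:2410.15739 — 3 statements merged into one kernel-verified Lean document; each statement's English description precedes it below -/
import Mathlib

section
/- There exists an involution ι_P on SSVT_P(λ,n) \ {T_P} with no fixed points such that |ι_P(T)| = |T| ± 1 for every T; consequently the map T ↦ (-1)^{|T|} is sign-reversing and these tableaux can be partitioned into pairs of opposite parity of |T|. -/
open Finset

/- Letters of the alphabet `{1' < 1 < 2' < 2 < … < n' < n}` are encoded as
natural numbers: `2*k - 1` encodes the primed letter `k'` and `2*k` encodes the
unprimed letter `k`.  The usual order on `ℕ` then matches the alphabet order. -/

/-- A strict partition: a strictly decreasing list of positive integers. -/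
def IsStrictPartition (lam : List ℕ) : Prop :=
  lam.Chain' (· > ·) ∧ ∀ p ∈ lam, 0 < p

/-- Cells of the shifted skew Young diagram of `λ/μ` (rows are 1-indexed):
`(i,j)` with `1 ≤ i ≤ ℓ(λ)` and `μ_i + i ≤ j ≤ λ_i + i - 1`. -/
def sCells (lam mu : List ℕ) : Finset (ℕ × ℕ) :=
  (Finset.range (lam.length + 1) ×ˢ
      Finset.range (lam.length + lam.foldr max 0 + 1)).filter
    (fun c => 1 ≤ c.1 ∧ c.1 ≤ lam.length ∧
      mu.getD (c.1 - 1) 0 + c.1 ≤ c.2 ∧ c.2 ≤ lam.getD (c.1 - 1) 0 + c.1 - 1)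

/-- Shifted skew set-valued semistandard tableau of Q-type of shape `λ/μ`,
with letters from `{1' < 1 < … < n' < n}` (encoded in `[1, 2n]`). -/
structure IsSSVTQ (lam mu : List ℕ) (n : ℕ) (T : ℕ × ℕ → Finset ℕ) : Prop where
  support : ∀ c, c ∉ sCells lam mu → T c = ∅
  cellNonempty : ∀ c ∈ sCells lam mu, (T c).Nonempty
  inRange : ∀ c, ∀ a ∈ T c, 1 ≤ a ∧ a ≤ 2 * n
  rowWeak : ∀ i j, (i, j) ∈ sCells lam mu → (i, j + 1) ∈ sCells lam mu →
      ∀ a ∈ T (i, j), ∀ b ∈ T (i, j + 1), a ≤ b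
  colWeak : ∀ i j, (i, j) ∈ sCells lam mu → (i + 1, j) ∈ sCells lam mu →
      ∀ a ∈ T (i, j), ∀ b ∈ T (i + 1, j), a ≤ b
  colOnce : ∀ a, a % 2 = 0 → ∀ i i' j, a ∈ T (i, j) → a ∈ T (i', j) → i = i'
  rowOnce : ∀ a, a % 2 = 1 → ∀ i j j', a ∈ T (i, j) → a ∈ T (i, j') → j = j'

/-- P-type: additionally no primed (odd-encoded) letters on the main diagonal. -/
def IsSSVTP (lam mu : List ℕ) (n : ℕ) (T : ℕ × ℕ → Finset ℕ) : Prop :=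
  IsSSVTQ lam mu n T ∧ ∀ i, ∀ a ∈ T (i, i), a % 2 = 0

/-- `|T|`: total number of letters placed in the tableau. -/
def tabSize (lam mu : List ℕ) (T : ℕ × ℕ → Finset ℕ) : ℕ :=
  ∑ c ∈ sCells lam mu, (T c).card

/-- `ω_k(T)`: number of occurrences of `k` and `k'` in `T`. -/
def tabWeight (lam mu : List ℕ) (T : ℕ × ℕ → Finset ℕ) (k : ℕ) : ℕ :=
  ∑ c ∈ sCells lam mu, ((T c).filter (fun a => (a + 1) / 2 = k)).card

/-- Total entry sum of a tableau, where the letter encoded by `a` has value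
`a/2` (so `k'` counts as `k - 1/2` and `k` counts as `k`). -/
def entrySum (lam mu : List ℕ) (T : ℕ × ℕ → Finset ℕ) : ℚ :=
  ∑ c ∈ sCells lam mu, ∑ a ∈ T c, (a : ℚ) / 2

/-- The minimal straight-shape P-tableau `T_P`, with `(T_P)_{i,j} = {i}`. -/
def TminP (lam : List ℕ) : ℕ × ℕ → Finset ℕ :=
  fun c => if c ∈ sCells lam [] then {2 * c.1} else ∅

/-- The minimal straight-shape Q-tableau `T_Q`, with `(T_Q)_{i,i} = {i'}` and
`(T_Q)_{i,j} = {i}` off the diagonal. -/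
def TminQ (lam : List ℕ) : ℕ × ℕ → Finset ℕ :=
  fun c => if c ∈ sCells lam [] then
    (if c.1 = c.2 then {2 * c.1 - 1} else {2 * c.1}) else ∅

/-- Specialization of the K-theoretic (skew) Schur P-function
`GP_{λ/μ}(x₁,…,xₙ | β) = Σ_T β^{|T|-|λ/μ|} x^{ω(T)}`. -/
noncomputable def GPspec (lam mu : List ℕ) (n : ℕ) (x : ℕ → ℚ) (β : ℚ) : ℚ :=
  ∑ᶠ T ∈ {T : ℕ × ℕ → Finset ℕ | IsSSVTP lam mu n T},
    β ^ (tabSize lam mu T - (lam.sum - mu.sum)) *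
      ∏ k ∈ Finset.Icc 1 n, x k ^ tabWeight lam mu T k

/-- Specialization of the K-theoretic (skew) Schur Q-function. -/
noncomputable def GQspec (lam mu : List ℕ) (n : ℕ) (x : ℕ → ℚ) (β : ℚ) : ℚ :=
  ∑ᶠ T ∈ {T : ℕ × ℕ → Finset ℕ | IsSSVTQ lam mu n T},
    β ^ (tabSize lam mu T - (lam.sum - mu.sum)) *
      ∏ k ∈ Finset.Icc 1 n, x k ^ tabWeight lam mu T k

/-- Schur P-polynomial: sum of `x^{ω(T)}` over shifted semistandard tableaux
(set-valued tableaux all of whose cells are singletons), P-condition. -/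
noncomputable def Ppoly (lam : List ℕ) (n : ℕ) (x : ℕ → ℚ) : ℚ :=
  ∑ᶠ T ∈ {T : ℕ × ℕ → Finset ℕ | IsSSVTP lam [] n T ∧
      ∀ c ∈ sCells lam [], (T c).card = 1},
    ∏ k ∈ Finset.Icc 1 n, x k ^ tabWeight lam [] T k

/-- Schur Q-polynomial (no diagonal restriction). -/
noncomputable def Qpoly (lam : List ℕ) (n : ℕ) (x : ℕ → ℚ) : ℚ :=
  ∑ᶠ T ∈ {T : ℕ × ℕ → Finset ℕ | IsSSVTQ lam [] n T ∧
      ∀ c ∈ sCells lam [], (T c).card = 1},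
    ∏ k ∈ Finset.Icc 1 n, x k ^ tabWeight lam [] T k

/-- Rows of `μ` containing a removable box: row `i` (1-indexed) is removable
iff decreasing `μ_i` by one again yields a strict partition. -/
def remRows (mu : List ℕ) : Finset ℕ :=
  (Finset.Icc 1 mu.length).filter
    (fun i => mu.getD i 0 + 1 < mu.getD (i - 1) 0 ∨ mu.getD (i - 1) 0 = 1)

/-- Remove one box from each row in `B` (rows 1-indexed). -/
def removeRows (mu : List ℕ) (B : Finset ℕ) : List ℕ :=
  mu.mapIdx (fun i p => if i + 1 ∈ B then p - 1 else p)

/-- Strictly decreasing list of naturals, allowing trailing zeros. -/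
def IsStrictPartitionZ (l : List ℕ) : Prop :=
  l.Chain' (fun a b => b < a ∨ b = 0)

/-- `μ ⊆ λ` componentwise (with `μ` padded by zeros). -/
def SubPartition (mu lam : List ℕ) : Prop :=
  mu.length ≤ lam.length ∧ ∀ i, mu.getD i 0 ≤ lam.getD i 0

namespace SRI

lemma getD_le_foldr (l : List ℕ) (k : ℕ) : l.getD k 0 ≤ l.foldr max 0 := by
  induction l generalizing k with
  | nil => simp
  | cons a t ih =>
    cases k with
    | zero => simp
    | succ k => simpa using le_trans (ih k) (le_max_right a (t.foldr max 0))

lemma mem_sCells_nil (lam : List ℕ) (c : ℕ × ℕ) :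
    c ∈ sCells lam [] ↔ 1 ≤ c.1 ∧ c.1 ≤ lam.length ∧ c.1 ≤ c.2 ∧
      c.2 ≤ lam.getD (c.1 - 1) 0 + c.1 - 1 := by
  have hle := getD_le_foldr lam (c.1 - 1)
  unfold sCells
  rw [Finset.mem_filter]
  simp only [Finset.mem_product, Finset.mem_range,
    List.getD_nil]
  constructor
  · rintro ⟨-, h1, h2, h3, h4⟩
    exact ⟨h1, h2, by simpa using h3, h4⟩
  · rintro ⟨h1, h2, h3, h4⟩
    exact ⟨⟨by omega, by omega⟩, h1, h2, by simpa using h3, h4⟩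

lemma strict_getD (lam : List ℕ) (h : lam.Chain' (· > ·)) (a d : ℕ)
    (hd : a + d < lam.length) : lam.getD (a + d) 0 + d ≤ lam.getD a 0 := by
  induction d with
  | zero => simp
  | succ d ih =>
    have h1 : lam.getD (a + d + 1) 0 < lam.getD (a + d) 0 := by
      have h2 := List.isChain_iff_getElem.mp h (a + d) (by omega)
      have e1 : lam.getD (a + d) 0 = lam.get ⟨a + d, by omega⟩ := by
        simp [List.getD_eq_getElem?_getD,
          List.getElem?_eq_getElem (show a + d < lam.length by omega)]
      have e2 : lam.getD (a + d + 1) 0 = lam.get ⟨a + d + 1, by omega⟩ := by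
        simp [List.getD_eq_getElem?_getD,
          List.getElem?_eq_getElem (show a + d + 1 < lam.length by omega)]
      rw [e1, e2]; exact h2
    have := ih (by omega)
    show lam.getD (a + d + 1) 0 + (d + 1) ≤ lam.getD a 0
    omega

lemma row_contig (lam : List ℕ) (i j j' : ℕ) (h : (i, j) ∈ sCells lam [])
    (h1 : i ≤ j') (h2 : j' ≤ j) : (i, j') ∈ sCells lam [] := by
  rw [mem_sCells_nil] at h ⊢
  simp only at h ⊢
  omega

lemma col_contig (lam : List ℕ) (hch : lam.Chain' (· > ·)) (i j i' : ℕ)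
    (h : (i, j) ∈ sCells lam []) (h1 : 1 ≤ i') (h2 : i' ≤ i) :
    (i', j) ∈ sCells lam [] := by
  rw [mem_sCells_nil] at h ⊢
  simp only at h ⊢
  obtain ⟨ha, hb, hc, hd⟩ := h
  refine ⟨h1, by omega, by omega, ?_⟩
  rcases eq_or_lt_of_le h2 with rfl | hlt
  · omega
  · have key := strict_getD lam hch (i' - 1) (i - i') (by omega)
    have he : i' - 1 + (i - i') = i - 1 := by omega
    rw [he] at key
    omega

lemma diag_lb (lam : List ℕ) (n : ℕ) (T : ℕ × ℕ → Finset ℕ)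
    (hch : lam.Chain' (· > ·)) (hT : IsSSVTP lam [] n T) :
    ∀ i, ∀ a ∈ T (i, i), 2 * i ≤ a := by
  intro i
  induction i with
  | zero => intro a _; omega
  | succ i ih =>
    intro a ha
    have hcell : (i + 1, i + 1) ∈ sCells lam [] := by
      by_contra hc
      rw [hT.1.support _ hc] at ha
      exact absurd ha (Finset.notMem_empty a)
    have haeven := hT.2 (i + 1) a ha
    rcases Nat.eq_zero_or_pos i with rfl | hi
    · have := hT.1.inRange _ a ha; omega
    · have hcell2 : (i, i + 1) ∈ sCells lam [] :=
        col_contig lam hch (i + 1) (i + 1) i hcell hi (by omega)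
      have hcell3 : (i, i) ∈ sCells lam [] :=
        row_contig lam i (i + 1) i hcell2 le_rfl (by omega)
      obtain ⟨b, hb⟩ := hT.1.cellNonempty _ hcell2
      obtain ⟨cc, hcc⟩ := hT.1.cellNonempty _ hcell3
      have hcb : cc ≤ b := hT.1.rowWeak i i hcell3 hcell2 cc hcc b hb
      have hba : b ≤ a := hT.1.colWeak i (i + 1) hcell2 hcell b hb a ha
      have hclb : 2 * i ≤ cc := ih cc hcc
      by_contra hlt
      push_neg at hlt
      have ha2i : a = 2 * i := by omega
      have hb2i : b = 2 * i := by omega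
      have hb' : a ∈ T (i, i + 1) := by rw [ha2i, ← hb2i]; exact hb
      have := hT.1.colOnce a haeven (i + 1) i (i + 1) ha hb'
      omega

lemma cell_lb (lam : List ℕ) (n : ℕ) (T : ℕ × ℕ → Finset ℕ)
    (hch : lam.Chain' (· > ·)) (hT : IsSSVTP lam [] n T) :
    ∀ i j, ∀ a ∈ T (i, j), 2 * i ≤ a := by
  have aux : ∀ d i, ∀ a ∈ T (i, i + d), 2 * i ≤ a := by
    intro d
    induction d with
    | zero => intro i a ha; exact diag_lb lam n T hch hT i a ha
    | succ d ih =>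
      intro i a ha
      replace ha : a ∈ T (i, i + d + 1) := ha
      have hcell : (i, i + d + 1) ∈ sCells lam [] := by
        by_contra hc
        rw [hT.1.support _ hc] at ha
        exact absurd ha (Finset.notMem_empty a)
      have hcell' : (i, i + d) ∈ sCells lam [] :=
        row_contig lam i (i + d + 1) (i + d) hcell (by omega) (by omega)
      obtain ⟨b, hb⟩ := hT.1.cellNonempty _ hcell'
      have hba : b ≤ a := hT.1.rowWeak i (i + d) hcell' hcell b hb a ha
      have := ih i b hb
      omega
  intro i j a ha
  have hcell : (i, j) ∈ sCells lam [] := by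
    by_contra hc
    rw [hT.1.support _ hc] at ha
    exact absurd ha (Finset.notMem_empty a)
  have hij : i ≤ j := ((mem_sCells_nil lam _).mp hcell).2.2.1
  have := aux (j - i) i a (by rw [show i + (j - i) = j from by omega]; exact ha)
  exact this

lemma shrink {lam : List ℕ} {n : ℕ} {T T' : ℕ × ℕ → Finset ℕ}
    (hT : IsSSVTP lam [] n T) (hsub : ∀ c, T' c ⊆ T c)
    (hne : ∀ c ∈ sCells lam [], (T' c).Nonempty) : IsSSVTP lam [] n T' := by
  refine ⟨⟨fun c hc => Finset.subset_empty.mp (hT.1.support c hc ▸ hsub c), hne,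
    fun c a ha => hT.1.inRange c a (hsub c ha),
    fun i j h1 h2 a ha b hb => hT.1.rowWeak i j h1 h2 a (hsub _ ha) b (hsub _ hb),
    fun i j h1 h2 a ha b hb => hT.1.colWeak i j h1 h2 a (hsub _ ha) b (hsub _ hb),
    fun a h i i' j ha hb => hT.1.colOnce a h i i' j (hsub _ ha) (hsub _ hb),
    fun a h i j j' ha hb => hT.1.rowOnce a h i j j' (hsub _ ha) (hsub _ hb)⟩,
    fun i a ha => hT.2 i a (hsub _ ha)⟩

/-- Cells at which `T` differs from `T_P`. -/
def Dset (lam : List ℕ) (T : ℕ × ℕ → Finset ℕ) : Finset (ℕ × ℕ) :=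
  (sCells lam []).filter (fun c => T c ≠ {2 * c.1})

/-- Column-major linear key on cells. -/
def keyf (lam : List ℕ) (c : ℕ × ℕ) : ℕ := c.2 * (lam.length + 1) + c.1

lemma keyf_lt_left (lam : List ℕ) (i j : ℕ) : keyf lam (i, j) < keyf lam (i, j + 1) := by
  show j * (lam.length + 1) + i < (j + 1) * (lam.length + 1) + i
  have : (j + 1) * (lam.length + 1) = j * (lam.length + 1) + (lam.length + 1) := by ring
  omega

lemma keyf_lt_up (lam : List ℕ) (i i' j : ℕ) (hi : i < i') :
    keyf lam (i, j) < keyf lam (i', j) := by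
  show j * (lam.length + 1) + i < j * (lam.length + 1) + i'
  omega

/-- The minimal cell (in column-major order) where `T` differs from `T_P`. -/
noncomputable def minCell (lam : List ℕ) (T : ℕ × ℕ → Finset ℕ) : ℕ × ℕ :=
  (sInf (↑((Dset lam T).image (keyf lam)) : Set ℕ) % (lam.length + 1),
   sInf (↑((Dset lam T).image (keyf lam)) : Set ℕ) / (lam.length + 1))

lemma minCell_congr (lam : List ℕ) (T T' : ℕ × ℕ → Finset ℕ)
    (h : Dset lam T = Dset lam T') : minCell lam T = minCell lam T' := by
  unfold minCell; rw [h]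

lemma minCell_spec (lam : List ℕ) (T : ℕ × ℕ → Finset ℕ) (h : (Dset lam T).Nonempty) :
    minCell lam T ∈ Dset lam T ∧
      ∀ c ∈ Dset lam T, keyf lam (minCell lam T) ≤ keyf lam c := by
  have hne : (↑((Dset lam T).image (keyf lam)) : Set ℕ).Nonempty := by
    simpa using (h.image (keyf lam))
  have hmem := Nat.sInf_mem hne
  rw [Finset.mem_coe, Finset.mem_image] at hmem
  obtain ⟨c, hc, hkc⟩ := hmem
  have hc1 : c.1 < lam.length + 1 := by
    have := ((mem_sCells_nil lam c).mp (Finset.mem_filter.mp hc).1).2.1; omega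
  have h1 : sInf (↑((Dset lam T).image (keyf lam)) : Set ℕ) % (lam.length + 1) = c.1 := by
    rw [← hkc]
    show (c.2 * (lam.length + 1) + c.1) % (lam.length + 1) = c.1
    rw [mul_comm, Nat.mul_add_mod]
    exact Nat.mod_eq_of_lt hc1
  have h2 : sInf (↑((Dset lam T).image (keyf lam)) : Set ℕ) / (lam.length + 1) = c.2 := by
    rw [← hkc]
    show (c.2 * (lam.length + 1) + c.1) / (lam.length + 1) = c.2
    rw [mul_comm, Nat.mul_add_div (by omega), Nat.div_eq_of_lt hc1]
    omega
  have hmc : minCell lam T = c := by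
    unfold minCell
    rw [h1, h2]
  constructor
  · rw [hmc]; exact hc
  · intro c' hc'
    rw [hmc, hkc]
    exact Nat.sInf_le (by rw [Finset.mem_coe, Finset.mem_image]; exact ⟨c', hc', rfl⟩)

/-- Toggle an element of a finite set. -/
def tog (s : Finset ℕ) (x : ℕ) : Finset ℕ := if x ∈ s then s.erase x else insert x s

lemma tog_pos {s : Finset ℕ} {x : ℕ} (h : x ∈ s) : tog s x = s.erase x := by
  unfold tog; rw [if_pos h]

lemma tog_neg {s : Finset ℕ} {x : ℕ} (h : x ∉ s) : tog s x = insert x s := by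
  unfold tog; rw [if_neg h]

lemma tog_tog (s : Finset ℕ) (x : ℕ) : tog (tog s x) x = s := by
  by_cases h : x ∈ s
  · rw [tog_pos h, tog_neg (Finset.notMem_erase x s), Finset.insert_erase h]
  · rw [tog_neg h, tog_pos (Finset.mem_insert_self x s), Finset.erase_insert h]

/-- The sign-reversing involution `ι_P`. -/
noncomputable def iotaP (lam : List ℕ) (T : ℕ × ℕ → Finset ℕ) : ℕ × ℕ → Finset ℕ :=
  Function.update T (minCell lam T) (tog (T (minCell lam T)) (2 * (minCell lam T).1))

lemma iotaP_def (lam : List ℕ) (T : ℕ × ℕ → Finset ℕ) :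
    iotaP lam T = Function.update T (minCell lam T)
      (tog (T (minCell lam T)) (2 * (minCell lam T).1)) := rfl

lemma master (lam : List ℕ) (n : ℕ) (h : IsStrictPartition lam) (hn : lam.length ≤ n)
    (T : ℕ × ℕ → Finset ℕ) (hT : IsSSVTP lam [] n T) (hne : T ≠ TminP lam) :
    (IsSSVTP lam [] n (iotaP lam T) ∧ iotaP lam T ≠ TminP lam) ∧
    Dset lam (iotaP lam T) = Dset lam T ∧ iotaP lam T ≠ T ∧
    (tabSize lam [] (iotaP lam T) = tabSize lam [] T + 1 ∨
      tabSize lam [] T = tabSize lam [] (iotaP lam T) + 1) := by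
  obtain ⟨hch, -⟩ := h
  set c0 := minCell lam T with hc0def
  set x := 2 * c0.1 with hxdef
  set S' := tog (T c0) x with hS'def
  have hDne : (Dset lam T).Nonempty := by
    by_contra hD
    rw [Finset.not_nonempty_iff_eq_empty] at hD
    apply hne
    funext c
    by_cases hc : c ∈ sCells lam []
    · have hcd : c ∉ Dset lam T := by rw [hD]; exact Finset.notMem_empty c
      rw [Dset, Finset.mem_filter, not_and, not_not] at hcd
      rw [hcd hc]
      simp [TminP, hc]
    · rw [hT.1.support c hc]
      simp [TminP, hc]
  have hspec := minCell_spec lam T hDne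
  rw [← hc0def] at hspec
  obtain ⟨hc0D, hmin⟩ := hspec
  have hc0cells : c0 ∈ sCells lam [] := (Finset.mem_filter.mp hc0D).1
  have hc0ne : T c0 ≠ {x} := by
    rw [hxdef]; exact (Finset.mem_filter.mp hc0D).2
  have hminT : ∀ c ∈ sCells lam [], keyf lam c < keyf lam c0 → T c = {2 * c.1} := by
    intro c hc hk
    by_contra hcc
    exact absurd (hmin c (Finset.mem_filter.mpr ⟨hc, hcc⟩)) (by omega)
  obtain ⟨hi0pos, hi0len, hij0, -⟩ := (mem_sCells_nil lam c0).mp hc0cells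
  have hlb := cell_lb lam n T hch hT
  have hfT : iotaP lam T = Function.update T c0 S' := by
    rw [iotaP_def, ← hc0def, ← hxdef, ← hS'def]
  have happ : ∀ c, c ≠ c0 → iotaP lam T c = T c := by
    intro c hc; rw [hfT]; exact Function.update_of_ne hc _ _
  have happ0 : iotaP lam T c0 = S' := by
    rw [hfT]; exact Function.update_self _ _ _
  have hS'ne : S' ≠ {x} := by
    intro hS
    by_cases hx : x ∈ T c0
    · rw [hS'def, tog_pos hx] at hS
      have : x ∈ (T c0).erase x := hS ▸ Finset.mem_singleton_self x
      exact absurd this (Finset.notMem_erase x _)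
    · rw [hS'def, tog_neg hx] at hS
      obtain ⟨y, hy⟩ := hT.1.cellNonempty c0 hc0cells
      have hyx : y ∈ ({x} : Finset ℕ) := hS ▸ Finset.mem_insert_of_mem hy
      rw [Finset.mem_singleton] at hyx
      exact hx (hyx ▸ hy)
  have hP' : IsSSVTP lam [] n (iotaP lam T) := by
    by_cases hx : x ∈ T c0
    · -- removal case
      have hsub : ∀ c, iotaP lam T c ⊆ T c := by
        intro c
        by_cases hc : c = c0
        · subst hc; rw [happ0, hS'def, tog_pos hx]; exact Finset.erase_subset _ _
        · rw [happ c hc]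
      apply shrink hT hsub
      intro c hc
      by_cases hcc : c = c0
      · subst hcc
        rw [happ0, hS'def, tog_pos hx]
        rcases Finset.eq_empty_or_nonempty ((T c0).erase x) with he | hne'
        · exfalso
          apply hc0ne
          apply Finset.eq_singleton_iff_unique_mem.mpr
          refine ⟨hx, fun y hy => ?_⟩
          by_contra hyx
          exact absurd (Finset.mem_erase.mpr ⟨hyx, hy⟩) (by rw [he]; exact Finset.notMem_empty y)
        · exact hne'
      · rw [happ c hcc]; exact hT.1.cellNonempty c hc
    · -- insertion case
      have hS'ins : S' = insert x (T c0) := by rw [hS'def, tog_neg hx]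
      have hmem : ∀ c a, a ∈ iotaP lam T c → a ∈ T c ∨ (c = c0 ∧ a = x) := by
        intro c a ha
        by_cases hc : c = c0
        · subst hc
          rw [happ0, hS'ins] at ha
          rcases Finset.mem_insert.mp ha with rfl | ha
          · right; exact ⟨rfl, rfl⟩
          · left; exact ha
        · left; rwa [happ c hc] at ha
      have hclaim : ∀ k, x ∈ T (k, c0.2) → k = c0.1 := by
        intro k hk
        have hcellk : (k, c0.2) ∈ sCells lam [] := by
          by_contra hcn
          rw [hT.1.support _ hcn] at hk
          exact absurd hk (Finset.notMem_empty x)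
        have hble := hlb k c0.2 x hk
        rcases Nat.lt_or_ge k c0.1 with hlt | hge
        · exfalso
          have hkey : keyf lam (k, c0.2) < keyf lam c0 := by
            have h' := keyf_lt_up lam k c0.1 c0.2 hlt
            rwa [Prod.mk.eta] at h'
          have heq := hminT _ hcellk hkey
          rw [heq, Finset.mem_singleton] at hk
          have hk' : x = 2 * k := hk
          omega
        · omega
      refine ⟨⟨?_, ?_, ?_, ?_, ?_, ?_, ?_⟩, ?_⟩
      · -- support
        intro c hc
        have hcc : c ≠ c0 := fun he => hc (he ▸ hc0cells)
        rw [happ c hcc]; exact hT.1.support c hc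
      · -- nonempty
        intro c hc
        by_cases hcc : c = c0
        · subst hcc; rw [happ0, hS'ins]; exact Finset.insert_nonempty _ _
        · rw [happ c hcc]; exact hT.1.cellNonempty c hc
      · -- range
        intro c a ha
        rcases hmem c a ha with ha' | ⟨-, rfl⟩
        · exact hT.1.inRange c a ha'
        · omega
      · -- rowWeak
        intro i j hcell1 hcell2 a ha b hb
        rcases hmem _ a ha with ha' | ⟨he, rfl⟩
        · rcases hmem _ b hb with hb' | ⟨he2, rfl⟩
          · exact hT.1.rowWeak i j hcell1 hcell2 a ha' b hb'
          · have hkey : keyf lam (i, j) < keyf lam c0 := by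
              rw [← he2]; exact keyf_lt_left lam i j
            have heq := hminT (i, j) hcell1 hkey
            rw [heq, Finset.mem_singleton] at ha'
            have ha'' : a = 2 * i := ha'
            have hi : i = c0.1 := congrArg Prod.fst he2
            omega
        · rcases hmem _ b hb with hb' | ⟨he2, rfl⟩
          · have hble := hlb i (j + 1) b hb'
            have hi : i = c0.1 := congrArg Prod.fst he
            omega
          · exact le_refl x
      · -- colWeak
        intro i j hcell1 hcell2 a ha b hb
        rcases hmem _ a ha with ha' | ⟨he, rfl⟩
        · rcases hmem _ b hb with hb' | ⟨he2, rfl⟩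
          · exact hT.1.colWeak i j hcell1 hcell2 a ha' b hb'
          · have hkey : keyf lam (i, j) < keyf lam c0 := by
              rw [← he2]; exact keyf_lt_up lam i (i + 1) j (by omega)
            have heq := hminT (i, j) hcell1 hkey
            rw [heq, Finset.mem_singleton] at ha'
            have ha'' : a = 2 * i := ha'
            have hi : i + 1 = c0.1 := congrArg Prod.fst he2
            omega
        · rcases hmem _ b hb with hb' | ⟨he2, rfl⟩
          · have hble := hlb (i + 1) j b hb'
            have hi : i = c0.1 := congrArg Prod.fst he
            omega
          · exact le_refl x
      · -- colOnce
        intro a haeven i i' j ha hb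
        rcases hmem _ a ha with ha' | ⟨he, hax⟩
        · rcases hmem _ a hb with hb' | ⟨he2, hax⟩
          · exact hT.1.colOnce a haeven i i' j ha' hb'
          · have hj : j = c0.2 := congrArg Prod.snd he2
            have hi' : i' = c0.1 := congrArg Prod.fst he2
            subst hax
            rw [hj] at ha'
            rw [hclaim i ha', hi']
        · rcases hmem _ a hb with hb' | ⟨he2, hbx⟩
          · have hj : j = c0.2 := congrArg Prod.snd he
            have hi : i = c0.1 := congrArg Prod.fst he
            subst hax
            rw [hj] at hb'
            rw [hclaim i' hb', hi]
          · have h1 : i = c0.1 := congrArg Prod.fst he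
            have h2 : i' = c0.1 := congrArg Prod.fst he2
            rw [h1, h2]
      · -- rowOnce
        intro a haodd i j j' ha hb
        have ha' : a ∈ T (i, j) := by
          rcases hmem _ a ha with h' | ⟨-, rfl⟩
          · exact h'
          · omega
        have hb' : a ∈ T (i, j') := by
          rcases hmem _ a hb with h' | ⟨-, rfl⟩
          · exact h'
          · omega
        exact hT.1.rowOnce a haodd i j j' ha' hb'
      · -- diagonal
        intro i a ha
        rcases hmem _ a ha with ha' | ⟨-, rfl⟩
        · exact hT.2 i a ha'
        · omega
  have hfTne : iotaP lam T ≠ TminP lam := by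
    intro hE
    apply hS'ne
    have := congrFun hE c0
    rw [happ0] at this
    rw [this]
    simp only [TminP, if_pos hc0cells]
    rfl
  have hD : Dset lam (iotaP lam T) = Dset lam T := by
    ext c
    simp only [Dset, Finset.mem_filter]
    by_cases hc : c = c0
    · subst hc
      rw [happ0]
      constructor
      · rintro ⟨h1, -⟩
        exact ⟨h1, by rw [← hxdef]; exact hc0ne⟩
      · rintro ⟨h1, -⟩
        exact ⟨h1, by rw [← hxdef]; exact hS'ne⟩
    · rw [happ c hc]
  have hneT : iotaP lam T ≠ T := by
    intro hE
    have hEc := congrFun hE c0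
    rw [happ0] at hEc
    by_cases hx : x ∈ T c0
    · rw [hS'def, tog_pos hx] at hEc
      exact (Finset.erase_eq_self.mp hEc) hx
    · rw [hS'def, tog_neg hx] at hEc
      exact hx (hEc ▸ Finset.mem_insert_self x (T c0))
  refine ⟨⟨hP', hfTne⟩, hD, hneT, ?_⟩
  have e1 : tabSize lam [] (iotaP lam T) =
      (iotaP lam T c0).card + ∑ c ∈ sCells lam [] \ {c0}, (iotaP lam T c).card :=
    Finset.sum_eq_add_sum_sdiff_singleton_of_mem hc0cells _
  have e1' : ∑ c ∈ sCells lam [] \ {c0}, (iotaP lam T c).card =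
      ∑ c ∈ sCells lam [] \ {c0}, (T c).card := by
    refine Finset.sum_congr rfl fun c hc => ?_
    rw [happ c (fun he => (Finset.mem_sdiff.mp hc).2
      (by rw [he]; exact Finset.mem_singleton_self c0))]
  have e2 : tabSize lam [] T =
      (T c0).card + ∑ c ∈ sCells lam [] \ {c0}, (T c).card :=
    Finset.sum_eq_add_sum_sdiff_singleton_of_mem hc0cells _
  rw [e1, e1', happ0, e2]
  by_cases hx : x ∈ T c0
  · right
    have hcard : (T c0).card = S'.card + 1 := by
      rw [hS'def, tog_pos hx, Finset.card_erase_of_mem hx]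
      have := Finset.card_pos.mpr ⟨x, hx⟩
      omega
    omega
  · left
    have hcard : S'.card = (T c0).card + 1 := by
      rw [hS'def, tog_neg hx]
      exact Finset.card_insert_of_notMem hx
    omega

end SRI

/-- there is a fixed-point-free involution `ι_P` on
`SSVT_P(λ,n) \ {T_P}` changing `|T|` by exactly one. -/
theorem exists_sign_reversing_involution (lam : List ℕ) (n : ℕ)
    (h : IsStrictPartition lam) (hn : lam.length ≤ n) :
    ∃ f : (ℕ × ℕ → Finset ℕ) → (ℕ × ℕ → Finset ℕ),
      (∀ T ∈ {T : ℕ × ℕ → Finset ℕ | IsSSVTP lam [] n T ∧ T ≠ TminP lam},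
        f T ∈ {T : ℕ × ℕ → Finset ℕ | IsSSVTP lam [] n T ∧ T ≠ TminP lam}) ∧
      (∀ T ∈ {T : ℕ × ℕ → Finset ℕ | IsSSVTP lam [] n T ∧ T ≠ TminP lam},
        f (f T) = T) ∧
      (∀ T ∈ {T : ℕ × ℕ → Finset ℕ | IsSSVTP lam [] n T ∧ T ≠ TminP lam},
        f T ≠ T) ∧
      (∀ T ∈ {T : ℕ × ℕ → Finset ℕ | IsSSVTP lam [] n T ∧ T ≠ TminP lam},
        tabSize lam [] (f T) = tabSize lam [] T + 1 ∨
          tabSize lam [] T = tabSize lam [] (f T) + 1) := by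
  refine ⟨SRI.iotaP lam, ?_, ?_, ?_, ?_⟩
  · rintro T ⟨hT, hne⟩
    exact ⟨(SRI.master lam n h hn T hT hne).1.1, (SRI.master lam n h hn T hT hne).1.2⟩
  · rintro T ⟨hT, hne⟩
    obtain ⟨-, hD, -, -⟩ := SRI.master lam n h hn T hT hne
    have hmc : SRI.minCell lam (SRI.iotaP lam T) = SRI.minCell lam T :=
      SRI.minCell_congr lam _ _ hD
    rw [SRI.iotaP_def lam (SRI.iotaP lam T), hmc,
      show (SRI.iotaP lam T) (SRI.minCell lam T)
          = SRI.tog (T (SRI.minCell lam T)) (2 * (SRI.minCell lam T).1) from by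
        rw [SRI.iotaP_def lam T]; exact Function.update_self _ _ _,
      SRI.tog_tog, SRI.iotaP_def lam T, Function.update_idem, Function.update_eq_self]
  · rintro T ⟨hT, hne⟩
    exact (SRI.master lam n h hn T hT hne).2.2.1
  · rintro T ⟨hT, hne⟩
    exact (SRI.master lam n h hn T hT hne).2.2.2
end

section
/- For any strict partitions μ ⊆ λ (componentwise, with μ padded by zeros) and any n for which the set is nonempty, the number of shifted skew set-valued semistandard tableaux of P-type of shape λ/μ in n letters is odd. -/
open Finset

namespace SkewOddAux

/-- entries of a strictly decreasing positive list drop at least linearly -/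
lemma getD_le_sub (l : List ℕ) (hl : l.Chain' (· > ·)) :
    ∀ d k, k + d < l.length → l.getD (k + d) 0 + d ≤ l.getD k 0 := by
  intro d
  induction d with
  | zero => intro k _; simpa using Nat.le_refl _
  | succ d ih =>
    intro k hk
    have h1 : l.getD (k + d + 1) 0 < l.getD (k + d) 0 := by
      rw [List.getD_eq_getElem _ _ (by omega : k + d + 1 < l.length),
        List.getD_eq_getElem _ _ (by omega : k + d < l.length)]
      have := List.isChain_iff_getElem.mp hl (k + d) (by omega)
      simpa [List.get_eq_getElem] using this
    have h2 := ih k (by omega)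
    have : k + (d + 1) = k + d + 1 := by omega
    rw [this]; omega

lemma getD_le_foldr (l : List ℕ) (k : ℕ) : l.getD k 0 ≤ l.foldr max 0 := by
  induction l generalizing k with
  | nil => simp
  | cons x xs ih => cases k with
    | zero => simp [List.getD]
    | succ k => simpa [List.getD] using Or.inr (ih k)

lemma getD_pos (l : List ℕ) (hl : ∀ p ∈ l, 0 < p) (k : ℕ) (hk : k < l.length) :
    0 < l.getD k 0 := by
  rw [List.getD_eq_getElem _ _ hk]
  exact hl _ (l.getElem_mem hk)

section Shape

variable (lam mu : List ℕ)

/-- clean membership criterion for `sCells` -/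
lemma mem_sCells_iff {i j : ℕ} :
    (i, j) ∈ sCells lam mu ↔
      1 ≤ i ∧ i ≤ lam.length ∧ mu.getD (i-1) 0 + i ≤ j ∧ j ≤ lam.getD (i-1) 0 + i - 1 := by
  unfold sCells
  simp only [Finset.mem_filter, Finset.mem_product, Finset.mem_range]
  constructor
  · rintro ⟨-, h⟩; exact h
  · rintro ⟨h1, h2, h3, h4⟩
    refine ⟨⟨by omega, ?_⟩, h1, h2, h3, h4⟩
    have := getD_le_foldr lam (i-1)
    omega

variable (hl : IsStrictPartition lam) (hm : IsStrictPartition mu)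

include hl in
lemma lam_getD_pos {i : ℕ} (h1 : 1 ≤ i) (h2 : i ≤ lam.length) : 1 ≤ lam.getD (i-1) 0 :=
  getD_pos lam hl.2 _ (by omega)

include hl in
/-- cell row bound without truncated subtraction -/
lemma cell_ub {i j : ℕ} (h : (i, j) ∈ sCells lam mu) : j + 1 ≤ lam.getD (i-1) 0 + i := by
  rw [mem_sCells_iff] at h
  have := lam_getD_pos lam hl h.1 h.2.1
  omega

lemma cell_lb {i j : ℕ} (h : (i, j) ∈ sCells lam mu) : mu.getD (i-1) 0 + i ≤ j := by
  rw [mem_sCells_iff] at h; exact h.2.2.1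

lemma cell_i_le_j {i j : ℕ} (h : (i, j) ∈ sCells lam mu) : i ≤ j := by
  have := cell_lb lam mu h; omega

/-- rows of the diagram are contiguous -/
lemma row_contig {i j1 j j2 : ℕ} (h1 : (i, j1) ∈ sCells lam mu)
    (h2 : (i, j2) ∈ sCells lam mu) (hj : j1 ≤ j ∧ j ≤ j2) : (i, j) ∈ sCells lam mu := by
  rw [mem_sCells_iff] at *
  omega

include hl hm in
/-- columns of the diagram are contiguous -/
lemma col_contig {i1 i i2 j : ℕ} (h1 : (i1, j) ∈ sCells lam mu)
    (h2 : (i2, j) ∈ sCells lam mu) (hi : i1 ≤ i ∧ i ≤ i2) : (i, j) ∈ sCells lam mu := by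
  rw [mem_sCells_iff] at h1 h2 ⊢
  obtain ⟨a1, a2, a3, a4⟩ := h1
  obtain ⟨b1, b2, b3, b4⟩ := h2
  refine ⟨by omega, by omega, ?_, ?_⟩
  · -- lower bound: mu.getD (i-1) 0 + i ≤ j
    by_cases hc : i - 1 < mu.length
    · -- strictly decreasing part: compare with row i1
      have := getD_le_sub mu hm.1 ((i-1) - (i1-1)) (i1-1) (by omega)
      have heq : (i1 - 1) + ((i - 1) - (i1 - 1)) = i - 1 := by omega
      rw [heq] at this
      omega
    · -- zero part: compare with row i2
      have hz : mu.getD (i-1) 0 = 0 := List.getD_eq_default _ _ (by omega)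
      have : mu.getD (i2-1) 0 ≥ 0 := Nat.zero_le _
      omega
  · -- upper bound: j ≤ lam.getD (i-1) 0 + i - 1, from row i2
    have hlp2 : 1 ≤ lam.getD (i2-1) 0 := getD_pos lam hl.2 _ (by omega)
    have hlpi : 1 ≤ lam.getD (i-1) 0 := getD_pos lam hl.2 _ (by omega)
    have := getD_le_sub lam hl.1 ((i2-1) - (i-1)) (i-1) (by omega)
    have heq : (i - 1) + ((i2 - 1) - (i - 1)) = i2 - 1 := by omega
    rw [heq] at this
    omega

include hl in
lemma cell_j_bound {i j : ℕ} (h : (i, j) ∈ sCells lam mu) :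
    j ≤ lam.length + lam.foldr max 0 := by
  have h2 := cell_ub lam mu hl h
  rw [mem_sCells_iff] at h
  have := getD_le_foldr lam (i-1)
  omega

end Shape
end SkewOddAux

namespace SkewOddAux

/-- strict bound for coordinates of cells -/
def BJ (lam : List ℕ) : ℕ := lam.length + lam.foldr max 0 + 2

lemma cell_sum_lt {lam mu : List ℕ} {w : ℕ × ℕ} (h : w ∈ sCells lam mu) :
    w.1 + w.2 < 2 * BJ lam := by
  obtain ⟨i, j⟩ := w
  have h1 := (mem_sCells_iff lam mu).mp h
  have h2 : j ≤ lam.length + lam.foldr max 0 := by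
    have := getD_le_foldr lam (i-1)
    omega
  unfold BJ; omega

/-- greedy maximal-entry function, defined by reverse-lex recursion -/
noncomputable def mval (lam mu : List ℕ) (n : ℕ) : ℕ × ℕ → ℕ
  | (i, j) =>
    if h : 2 * BJ lam ≤ i + j then 0
    else
      let mr := mval lam mu n (i, j + 1)
      let mb := mval lam mu n (i + 1, j)
      let F := (Finset.Icc 1 (2*n)).filter (fun a =>
        (i = j → a % 2 = 0) ∧
        ((i, j+1) ∈ sCells lam mu → a ≤ mr ∧ ¬(a = mr ∧ a % 2 = 1)) ∧
        ((i+1, j) ∈ sCells lam mu → a ≤ mb ∧ ¬(a = mb ∧ a % 2 = 0)))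
      if hF : F.Nonempty then F.max' hF else 0
  termination_by w => 2 * BJ lam - (w.1 + w.2)
  decreasing_by all_goals omega

/-- the feasibility set at a cell -/
noncomputable def Fset (lam mu : List ℕ) (n : ℕ) (w : ℕ × ℕ) : Finset ℕ :=
  (Finset.Icc 1 (2*n)).filter (fun a =>
    (w.1 = w.2 → a % 2 = 0) ∧
    ((w.1, w.2+1) ∈ sCells lam mu → a ≤ mval lam mu n (w.1, w.2+1) ∧
      ¬(a = mval lam mu n (w.1, w.2+1) ∧ a % 2 = 1)) ∧
    ((w.1+1, w.2) ∈ sCells lam mu → a ≤ mval lam mu n (w.1+1, w.2) ∧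
      ¬(a = mval lam mu n (w.1+1, w.2) ∧ a % 2 = 0)))

lemma mval_eq (lam mu : List ℕ) (n : ℕ) {w : ℕ × ℕ} (hw : w.1 + w.2 < 2 * BJ lam) :
    mval lam mu n w =
      if hF : (Fset lam mu n w).Nonempty then (Fset lam mu n w).max' hF else 0 := by
  obtain ⟨i, j⟩ := w
  rw [mval]
  rw [dif_neg (by simp only at hw; omega)]
  rfl

lemma mem_Fset_iff {lam mu : List ℕ} {n : ℕ} {w : ℕ × ℕ} {a : ℕ} :
    a ∈ Fset lam mu n w ↔
      (1 ≤ a ∧ a ≤ 2*n) ∧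
      (w.1 = w.2 → a % 2 = 0) ∧
      ((w.1, w.2+1) ∈ sCells lam mu → a ≤ mval lam mu n (w.1, w.2+1) ∧
        ¬(a = mval lam mu n (w.1, w.2+1) ∧ a % 2 = 1)) ∧
      ((w.1+1, w.2) ∈ sCells lam mu → a ≤ mval lam mu n (w.1+1, w.2) ∧
        ¬(a = mval lam mu n (w.1+1, w.2) ∧ a % 2 = 0)) := by
  unfold Fset
  simp [Finset.mem_filter, Finset.mem_Icc, and_assoc]

lemma le_mval_of_mem {lam mu : List ℕ} {n : ℕ} {w : ℕ × ℕ} {b : ℕ}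
    (hw : w ∈ sCells lam mu) (hb : b ∈ Fset lam mu n w) : b ≤ mval lam mu n w := by
  rw [mval_eq lam mu n (cell_sum_lt hw), dif_pos ⟨b, hb⟩]
  exact Finset.le_max' _ b hb

lemma mval_mem_Fset {lam mu : List ℕ} {n : ℕ} {w : ℕ × ℕ}
    (hw : w ∈ sCells lam mu) (hne : (Fset lam mu n w).Nonempty) :
    mval lam mu n w ∈ Fset lam mu n w := by
  rw [mval_eq lam mu n (cell_sum_lt hw), dif_pos hne]
  exact Finset.max'_mem _ hne

/-- F1: every entry of a valid tableau lies in the feasibility set of its cell -/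
lemma entry_mem_Fset {lam mu : List ℕ} {n : ℕ} {T : ℕ × ℕ → Finset ℕ}
    (hT : IsSSVTP lam mu n T) :
    ∀ K : ℕ, ∀ w : ℕ × ℕ, 2 * BJ lam - (w.1 + w.2) ≤ K → w ∈ sCells lam mu →
      ∀ a ∈ T w, a ∈ Fset lam mu n w := by
  intro K
  induction K with
  | zero =>
    intro w hK hw a ha
    exact absurd (cell_sum_lt hw) (by omega)
  | succ K ih =>
    rintro ⟨i, j⟩ hK hw a ha
    have hsum : i + j < 2 * BJ lam := cell_sum_lt hw
    have hK' : 2 * BJ lam - (i + j) ≤ K + 1 := hK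
    rw [mem_Fset_iff]
    refine ⟨⟨(hT.1.inRange _ a ha).1, (hT.1.inRange _ a ha).2⟩, ?_, ?_, ?_⟩
    · intro hij
      have hij' : i = j := hij
      subst hij'
      exact hT.2 i a ha
    · -- right neighbour clause
      intro hrr
      obtain ⟨b, hb⟩ := hT.1.cellNonempty _ hrr
      have hball : ∀ b' ∈ T (i, j+1), b' ∈ Fset lam mu n (i, j+1) :=
        ih (i, j+1) (by show 2 * BJ lam - (i + (j+1)) ≤ K; omega) hrr
      have hab : ∀ b' ∈ T (i, j+1), a ≤ b' := fun b' hb' =>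
        hT.1.rowWeak i j hw hrr a ha b' hb'
      constructor
      · exact le_trans (hab b hb) (le_mval_of_mem hrr (hball b hb))
      · rintro ⟨haeq, hodd⟩
        -- then T (i,j+1) = {a}; rowOnce contradiction
        have : a ∈ T (i, j+1) := by
          have h1 := hab b hb
          have h2 := le_mval_of_mem hrr (hball b hb)
          have : b = a := by omega
          rwa [← this]
        have := hT.1.rowOnce a hodd i j (j+1) ha this
        omega
    · -- below neighbour clause
      intro hbb
      obtain ⟨b, hb⟩ := hT.1.cellNonempty _ hbb
      have hball : ∀ b' ∈ T (i+1, j), b' ∈ Fset lam mu n (i+1, j) :=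
        ih (i+1, j) (by show 2 * BJ lam - (i + 1 + j) ≤ K; omega) hbb
      have hab : ∀ b' ∈ T (i+1, j), a ≤ b' := fun b' hb' =>
        hT.1.colWeak i j hw hbb a ha b' hb'
      constructor
      · exact le_trans (hab b hb) (le_mval_of_mem hbb (hball b hb))
      · rintro ⟨haeq, heven⟩
        have : a ∈ T (i+1, j) := by
          have h1 := hab b hb
          have h2 := le_mval_of_mem hbb (hball b hb)
          have : b = a := by omega
          rwa [← this]
        have := hT.1.colOnce a heven i (i+1) j ha this
        omega

lemma entry_mem_Fset' {lam mu : List ℕ} {n : ℕ} {T : ℕ × ℕ → Finset ℕ}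
    (hT : IsSSVTP lam mu n T) {w : ℕ × ℕ} (hw : w ∈ sCells lam mu) {a : ℕ}
    (ha : a ∈ T w) : a ∈ Fset lam mu n w :=
  entry_mem_Fset hT _ w le_rfl hw a ha

lemma entry_le_mval {lam mu : List ℕ} {n : ℕ} {T : ℕ × ℕ → Finset ℕ}
    (hT : IsSSVTP lam mu n T) {w : ℕ × ℕ} (hw : w ∈ sCells lam mu) {a : ℕ}
    (ha : a ∈ T w) : a ≤ mval lam mu n w :=
  le_mval_of_mem hw (entry_mem_Fset' hT hw ha)

end SkewOddAux

namespace SkewOddAux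

section Chains

variable {lam mu : List ℕ} {n : ℕ}

/-- nonemptiness of all feasibility sets, from existence of one tableau -/
lemma Fset_nonempty_of_tableau {T : ℕ × ℕ → Finset ℕ} (hT : IsSSVTP lam mu n T) :
    ∀ w ∈ sCells lam mu, (Fset lam mu n w).Nonempty := by
  intro w hw
  obtain ⟨a, ha⟩ := hT.1.cellNonempty w hw
  exact ⟨a, entry_mem_Fset' hT hw ha⟩

variable (hl : IsStrictPartition lam) (hm : IsStrictPartition mu)
variable (hF : ∀ w ∈ sCells lam mu, (Fset lam mu n w).Nonempty)

include hF in
lemma mval_bounds {w : ℕ × ℕ} (hw : w ∈ sCells lam mu) :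
    1 ≤ mval lam mu n w ∧ mval lam mu n w ≤ 2 * n := by
  have := mval_mem_Fset hw (hF w hw)
  rw [mem_Fset_iff] at this
  exact this.1

include hF in
lemma mval_row_adj {i j : ℕ} (h1 : (i, j) ∈ sCells lam mu) (h2 : (i, j+1) ∈ sCells lam mu) :
    mval lam mu n (i, j) ≤ mval lam mu n (i, j+1) ∧
      (mval lam mu n (i, j) = mval lam mu n (i, j+1) → mval lam mu n (i, j) % 2 = 0) := by
  have := mval_mem_Fset h1 (hF _ h1)
  rw [mem_Fset_iff] at this
  have hc := this.2.2.1 h2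
  refine ⟨hc.1, fun he => ?_⟩
  rcases Nat.even_or_odd (mval lam mu n (i, j)) with h | h
  · exact Nat.even_iff.mp h
  · exact absurd ⟨he, Nat.odd_iff.mp h⟩ hc.2

include hF in
lemma mval_col_adj {i j : ℕ} (h1 : (i, j) ∈ sCells lam mu) (h2 : (i+1, j) ∈ sCells lam mu) :
    mval lam mu n (i, j) ≤ mval lam mu n (i+1, j) ∧
      (mval lam mu n (i, j) = mval lam mu n (i+1, j) → mval lam mu n (i, j) % 2 = 1) := by
  have := mval_mem_Fset h1 (hF _ h1)
  rw [mem_Fset_iff] at this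
  have hc := this.2.2.2 h2
  refine ⟨hc.1, fun he => ?_⟩
  rcases Nat.even_or_odd (mval lam mu n (i, j)) with h | h
  · exact absurd ⟨he, Nat.even_iff.mp h⟩ hc.2
  · exact Nat.odd_iff.mp h

include hF in
/-- mval increases weakly along rows, with equality only for even values -/
lemma mval_row : ∀ (d j i j' : ℕ), j' = j + d + 1 → (i, j) ∈ sCells lam mu →
    (i, j') ∈ sCells lam mu →
    mval lam mu n (i, j) ≤ mval lam mu n (i, j') ∧
      (mval lam mu n (i, j) = mval lam mu n (i, j') → mval lam mu n (i, j) % 2 = 0) := by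
  intro d
  induction d with
  | zero =>
    intro j i j' hj' h1 h2
    subst hj'
    exact mval_row_adj hF h1 h2
  | succ d ih =>
    intro j i j' hj' h1 h2
    have hmid : (i, j+1) ∈ sCells lam mu := row_contig lam mu h1 h2 (by omega)
    have hbase := mval_row_adj hF h1 hmid
    have hstep := ih (j+1) i j' (by omega) hmid h2
    exact ⟨le_trans hbase.1 hstep.1, fun he => hbase.2 (by omega)⟩

include hl hm hF in
/-- mval increases weakly along columns, with equality only for odd values -/
lemma mval_col : ∀ (d j i i' : ℕ), i' = i + d + 1 → (i, j) ∈ sCells lam mu →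
    (i', j) ∈ sCells lam mu →
    mval lam mu n (i, j) ≤ mval lam mu n (i', j) ∧
      (mval lam mu n (i, j) = mval lam mu n (i', j) → mval lam mu n (i, j) % 2 = 1) := by
  intro d
  induction d with
  | zero =>
    intro j i i' hi' h1 h2
    subst hi'
    exact mval_col_adj hF h1 h2
  | succ d ih =>
    intro j i i' hi' h1 h2
    have hmid : (i+1, j) ∈ sCells lam mu := col_contig lam mu hl hm h1 h2 (by omega)
    have hbase := mval_col_adj hF h1 hmid
    have hstep := ih j (i+1) i' (by omega) hmid h2
    exact ⟨le_trans hbase.1 hstep.1, fun he => hbase.2 (by omega)⟩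

variable {T : ℕ × ℕ → Finset ℕ} (hT : IsSSVTP lam mu n T)

include hT in
/-- entries increase weakly along a row (arbitrary distance) -/
lemma entry_row : ∀ (d j i j' : ℕ), j' = j + d + 1 → (i, j) ∈ sCells lam mu →
    (i, j') ∈ sCells lam mu → ∀ x ∈ T (i, j), ∀ y ∈ T (i, j'), x ≤ y := by
  intro d
  induction d with
  | zero =>
    intro j i j' hj' h1 h2 x hx y hy
    subst hj'
    exact hT.1.rowWeak i j h1 h2 x hx y hy
  | succ d ih =>
    intro j i j' hj' h1 h2 x hx y hy
    have hmid : (i, j+1) ∈ sCells lam mu := row_contig lam mu h1 h2 (by omega)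
    obtain ⟨z, hz⟩ := hT.1.cellNonempty _ hmid
    exact le_trans (hT.1.rowWeak i j h1 hmid x hx z hz) (ih (j+1) i j' (by omega) hmid h2 z hz y hy)

include hl hm hT in
/-- entries increase weakly along a column (arbitrary distance) -/
lemma entry_col : ∀ (d j i i' : ℕ), i' = i + d + 1 → (i, j) ∈ sCells lam mu →
    (i', j) ∈ sCells lam mu → ∀ x ∈ T (i, j), ∀ y ∈ T (i', j), x ≤ y := by
  intro d
  induction d with
  | zero =>
    intro j i i' hi' h1 h2 x hx y hy
    subst hi'
    exact hT.1.colWeak i j h1 h2 x hx y hy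
  | succ d ih =>
    intro j i i' hi' h1 h2 x hx y hy
    have hmid : (i+1, j) ∈ sCells lam mu := col_contig lam mu hl hm h1 h2 (by omega)
    obtain ⟨z, hz⟩ := hT.1.cellNonempty _ hmid
    exact le_trans (hT.1.colWeak i j h1 hmid x hx z hz) (ih j (i+1) i' (by omega) hmid h2 z hz y hy)

end Chains

/-- the maximal tableau -/
noncomputable def Tmax (lam mu : List ℕ) (n : ℕ) : ℕ × ℕ → Finset ℕ :=
  fun c => if c ∈ sCells lam mu then {mval lam mu n c} else ∅

section TmaxValid

variable {lam mu : List ℕ} {n : ℕ}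
variable (hl : IsStrictPartition lam) (hm : IsStrictPartition mu)
variable (hF : ∀ w ∈ sCells lam mu, (Fset lam mu n w).Nonempty)

lemma Tmax_apply_mem {c : ℕ × ℕ} (hc : c ∈ sCells lam mu) :
    Tmax lam mu n c = {mval lam mu n c} := if_pos hc

lemma Tmax_apply_notMem {c : ℕ × ℕ} (hc : c ∉ sCells lam mu) :
    Tmax lam mu n c = ∅ := if_neg hc

lemma mem_Tmax_iff {c : ℕ × ℕ} {a : ℕ} :
    a ∈ Tmax lam mu n c ↔ c ∈ sCells lam mu ∧ a = mval lam mu n c := by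
  unfold Tmax
  by_cases hc : c ∈ sCells lam mu <;> simp [hc]

include hl hm hF in
lemma Tmax_valid : IsSSVTP lam mu n (Tmax lam mu n) := by
  constructor
  · constructor
    · exact fun c hc => Tmax_apply_notMem hc
    · intro c hc; rw [Tmax_apply_mem hc]; exact ⟨_, Finset.mem_singleton_self _⟩
    · intro c a ha
      rw [mem_Tmax_iff] at ha
      obtain ⟨hc, rfl⟩ := ha
      exact ⟨(mval_bounds hF hc).1, (mval_bounds hF hc).2⟩
    · intro i j h1 h2 a ha b hb
      rw [mem_Tmax_iff] at ha hb
      rw [ha.2, hb.2]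
      exact (mval_row hF 0 j i (j+1) rfl h1 h2).1
    · intro i j h1 h2 a ha b hb
      rw [mem_Tmax_iff] at ha hb
      rw [ha.2, hb.2]
      exact (mval_col hl hm hF 0 j i (i+1) rfl h1 h2).1
    · intro a haeven i i' j ha ha'
      rw [mem_Tmax_iff] at ha ha'
      by_contra hne
      rcases Nat.lt_or_ge i i' with h | h
      · have := (mval_col hl hm hF (i' - i - 1) j i i' (by omega) ha.1 ha'.1).2 (by omega)
        omega
      · have hlt : i' < i := by omega
        have := (mval_col hl hm hF (i - i' - 1) j i' i (by omega) ha'.1 ha.1).2 (by omega)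
        omega
    · intro a haodd i j j' ha ha'
      rw [mem_Tmax_iff] at ha ha'
      by_contra hne
      rcases Nat.lt_or_ge j j' with h | h
      · have := (mval_row hF (j' - j - 1) j i j' (by omega) ha.1 ha'.1).2 (by omega)
        omega
      · have hlt : j' < j := by omega
        have := (mval_row hF (j - j' - 1) j' i j (by omega) ha'.1 ha.1).2 (by omega)
        omega
  · intro i a ha
    rw [mem_Tmax_iff] at ha
    obtain ⟨hc, rfl⟩ := ha
    have := mval_mem_Fset hc (hF _ hc)
    rw [mem_Fset_iff] at this
    exact this.2.1 rfl

end TmaxValid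
end SkewOddAux

namespace SkewOddAux
open Classical in
/-- the set of tableaux is finite -/
lemma Tset_finite (lam mu : List ℕ) (n : ℕ) :
    {T : ℕ × ℕ → Finset ℕ | IsSSVTP lam mu n T}.Finite := by
  classical
  let G : Finset (ℕ × ℕ → Finset ℕ) :=
    ((sCells lam mu).pi (fun _ => ((Finset.Icc 1 (2*n)).powerset))).image
      (fun f => fun c => if h : c ∈ sCells lam mu then f c h else ∅)
  apply Set.Finite.subset G.finite_toSet
  intro T hT
  simp only [Finset.coe_image, Set.mem_image, Finset.mem_coe, G]
  refine ⟨fun c _ => T c, ?_, ?_⟩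
  · rw [Finset.mem_pi]
    intro c hc
    rw [Finset.mem_powerset]
    intro a ha
    rw [Finset.mem_Icc]
    exact hT.1.inRange c a ha
  · funext c
    by_cases hc : c ∈ sCells lam mu
    · simp [hc]
    · simp [hc, hT.1.support c hc]

/-- an involution without fixed points on a closed finset has even cardinality -/
lemma even_card_invol {α : Type*} [DecidableEq α] (f : α → α) :
    ∀ Q : Finset α, (∀ x ∈ Q, f x ∈ Q) → (∀ x ∈ Q, f (f x) = x) → (∀ x ∈ Q, f x ≠ x) →
      Even Q.card := by
  intro Q
  induction Q using Finset.strongInduction with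
  | _ Q ih =>
    intro hcl hinv hne
    rcases Q.eq_empty_or_nonempty with rfl | ⟨x, hx⟩
    · simp
    · have hfx : f x ∈ Q := hcl x hx
      have hfxne : f x ≠ x := hne x hx
      set Q' : Finset α := (Q.erase x).erase (f x) with hQ'
      have hxQ' : x ∉ Q' := by simp [hQ']
      have hfxQ' : f x ∉ Q' := by simp [hQ']
      have hQ'sub : Q' ⊆ Q := subset_trans (Finset.erase_subset _ _) (Finset.erase_subset _ _)
      have hss : Q' ⊂ Q := Finset.ssubset_iff_of_subset hQ'sub |>.mpr ⟨x, hx, hxQ'⟩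
      have hcard : Q.card = Q'.card + 2 := by
        have h1 : f x ∈ Q.erase x := Finset.mem_erase.mpr ⟨hfxne, hfx⟩
        have c1 : (Q.erase x).card = Q.card - 1 := Finset.card_erase_of_mem hx
        have c2 : Q'.card = (Q.erase x).card - 1 := Finset.card_erase_of_mem h1
        have : 1 ≤ Q.card := Finset.card_pos.mpr ⟨x, hx⟩
        have : 1 ≤ (Q.erase x).card := Finset.card_pos.mpr ⟨f x, h1⟩
        omega
      have hcl' : ∀ y ∈ Q', f y ∈ Q' := by
        intro y hy
        obtain ⟨hy2, hy1, hyQ⟩ : y ≠ f x ∧ y ≠ x ∧ y ∈ Q := by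
          simp only [hQ', Finset.mem_erase] at hy; tauto
        refine Finset.mem_erase.mpr ⟨?_, Finset.mem_erase.mpr ⟨?_, hcl y hyQ⟩⟩
        · intro h; exact hy1 (by rw [← hinv y hyQ, h, hinv x hx])
        · intro h; exact hy2 (by rw [← hinv y hyQ, h])
      have := ih Q' hss hcl' (fun y hy => hinv y (hQ'sub hy)) (fun y hy => hne y (hQ'sub hy))
      obtain ⟨k, hk⟩ := this
      exact ⟨k + 1, by omega⟩

open Classical in
/-- one toggle-reduction step preserves parity of the cardinality -/
lemma parity_step {α : Type*} (f : α → α) (S : Finset α)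
    (hinv : ∀ x ∈ S, f x ∈ S → f (f x) = x) (hne : ∀ x ∈ S, f x ≠ x) :
    S.card % 2 = (S.filter (fun x => f x ∉ S)).card % 2 := by
  classical
  have hsplit := Finset.card_filter_add_card_filter_not
    (s := S) (p := fun x => f x ∉ S)
  have heven : Even ((S.filter (fun x => ¬ f x ∉ S)).card) := by
    apply even_card_invol f
    · intro x hx
      simp only [Finset.mem_filter, not_not] at hx ⊢
      exact ⟨hx.2, by rw [hinv x hx.1 hx.2]; exact hx.1⟩
    · intro x hx
      simp only [Finset.mem_filter, not_not] at hx
      exact hinv x hx.1 hx.2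
    · intro x hx
      simp only [Finset.mem_filter, not_not] at hx
      exact hne x hx.1
  have := Nat.even_iff.mp heven
  omega

/-- the toggle map -/
def tog (w : ℕ × ℕ) (a : ℕ) (T : ℕ × ℕ → Finset ℕ) : ℕ × ℕ → Finset ℕ :=
  Function.update T w (symmDiff (T w) {a})

lemma tog_apply_self (w : ℕ × ℕ) (a : ℕ) (T : ℕ × ℕ → Finset ℕ) :
    tog w a T w = symmDiff (T w) {a} := Function.update_self w _ T

lemma tog_apply_ne (w : ℕ × ℕ) (a : ℕ) (T : ℕ × ℕ → Finset ℕ) {c : ℕ × ℕ} (h : c ≠ w) :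
    tog w a T c = T c := Function.update_of_ne h _ T

lemma symmDiff_singleton_not_mem {s : Finset ℕ} {a : ℕ} (h : a ∉ s) :
    symmDiff s {a} = insert a s := by
  ext x; simp [Finset.mem_symmDiff]; aesop

lemma symmDiff_singleton_mem {s : Finset ℕ} {a : ℕ} (h : a ∈ s) :
    symmDiff s {a} = s.erase a := by
  ext x; simp [Finset.mem_symmDiff, Finset.mem_erase]; aesop

lemma tog_tog (w : ℕ × ℕ) (a : ℕ) (T : ℕ × ℕ → Finset ℕ) : tog w a (tog w a T) = T := by
  funext c
  by_cases hc : c = w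
  · subst hc
    rw [tog_apply_self, tog_apply_self]
    exact symmDiff_symmDiff_cancel_right _ _
  · rw [tog_apply_ne _ _ _ hc, tog_apply_ne _ _ _ hc]

lemma tog_ne (w : ℕ × ℕ) (a : ℕ) (T : ℕ × ℕ → Finset ℕ) : tog w a T ≠ T := by
  intro h
  have heq := congrFun h w
  rw [tog_apply_self] at heq
  have hmem : a ∈ symmDiff (T w) {a} ↔ a ∉ T w := by
    simp [Finset.mem_symmDiff]
  rw [heq] at hmem
  tauto

/-- shrinking one cell of a tableau preserves validity -/
lemma shrink_valid {lam mu : List ℕ} {n : ℕ} {T : ℕ × ℕ → Finset ℕ}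
    (hT : IsSSVTP lam mu n T) {w : ℕ × ℕ} (hw : w ∈ sCells lam mu) {s : Finset ℕ}
    (hsub : s ⊆ T w) (hs : s.Nonempty) : IsSSVTP lam mu n (Function.update T w s) := by
  have hmem : ∀ c x, x ∈ Function.update T w s c → x ∈ T c := by
    intro c x hx
    by_cases hc : c = w
    · subst hc; rw [Function.update_self] at hx; exact hsub hx
    · rwa [Function.update_of_ne hc] at hx
  constructor
  · constructor
    · intro c hc
      have hcw : c ≠ w := fun h => hc (h ▸ hw)
      rw [Function.update_of_ne hcw]
      exact hT.1.support c hc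
    · intro c hc
      by_cases hcw : c = w
      · subst hcw; rw [Function.update_self]; exact hs
      · rw [Function.update_of_ne hcw]; exact hT.1.cellNonempty c hc
    · intro c x hx; exact hT.1.inRange c x (hmem c x hx)
    · intro i j h1 h2 x hx y hy
      exact hT.1.rowWeak i j h1 h2 x (hmem _ x hx) y (hmem _ y hy)
    · intro i j h1 h2 x hx y hy
      exact hT.1.colWeak i j h1 h2 x (hmem _ x hx) y (hmem _ y hy)
    · intro x hx i i' j h1 h2
      exact hT.1.colOnce x hx i i' j (hmem _ x h1) (hmem _ x h2)
    · intro x hx i j j' h1 h2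
      exact hT.1.rowOnce x hx i j j' (hmem _ x h1) (hmem _ x h2)
  · intro i x hx
    exact hT.2 i x (hmem _ x hx)

end SkewOddAux

namespace SkewOddAux

section AddValid

variable {lam mu : List ℕ} {n : ℕ}
variable (hl : IsStrictPartition lam) (hm : IsStrictPartition mu)
variable (hF : ∀ w ∈ sCells lam mu, (Fset lam mu n w).Nonempty)
variable {T : ℕ × ℕ → Finset ℕ} (hT : IsSSVTP lam mu n T)

include hT in
lemma cell_of_mem {c : ℕ × ℕ} {x : ℕ} (hx : x ∈ T c) : c ∈ sCells lam mu := by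
  by_contra h
  rw [hT.1.support c h] at hx
  exact absurd hx (Finset.notMem_empty x)

include hl hm hF hT in
/-- adding the maximal value to an unpinned cell of a partially pinned tableau
is valid -/
lemma add_valid {i j : ℕ} (hw : (i, j) ∈ sCells lam mu)
    (hpin : ∀ u ∈ sCells lam mu, i < u.1 ∨ (i = u.1 ∧ j < u.2) → T u = {mval lam mu n u})
    (hmnot : mval lam mu n (i, j) ∉ T (i, j)) :
    IsSSVTP lam mu n (tog (i, j) (mval lam mu n (i, j)) T) := by
  set m := mval lam mu n (i, j) with hm_def
  have htcell : tog (i,j) m T (i,j) = insert m (T (i,j)) := by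
    rw [tog_apply_self]; exact symmDiff_singleton_not_mem hmnot
  have hmF := mval_mem_Fset hw (hF _ hw)
  rw [mem_Fset_iff] at hmF
  obtain ⟨⟨hm1, hm2⟩, hmdiag, hmrr, hmbb⟩ := hmF
  have hTlt : ∀ x ∈ T (i, j), x < m := by
    intro x hx
    have h1 := entry_le_mval hT hw hx
    have h2 : x ≠ m := fun h => hmnot (h ▸ hx)
    omega
  have hmemw : ∀ x, x ∈ tog (i,j) m T (i,j) ↔ (x = m ∨ x ∈ T (i,j)) := by
    intro x; rw [htcell]; simp
  have hmemne : ∀ c : ℕ × ℕ, c ≠ (i,j) → tog (i,j) m T c = T c := fun c hc =>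
    tog_apply_ne _ _ _ hc
  constructor
  · constructor
    · intro c hc
      have hcw : c ≠ (i,j) := fun h => hc (h ▸ hw)
      rw [hmemne c hcw]; exact hT.1.support c hc
    · intro c hc
      by_cases hcw : c = (i,j)
      · subst hcw; rw [htcell]; exact Finset.insert_nonempty _ _
      · rw [hmemne c hcw]; exact hT.1.cellNonempty c hc
    · intro c x hx
      by_cases hcw : c = (i,j)
      · subst hcw
        rcases (hmemw x).mp hx with rfl | hx'
        · exact ⟨hm1, hm2⟩
        · exact hT.1.inRange _ x hx'
      · rw [hmemne c hcw] at hx; exact hT.1.inRange _ x hx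
    · -- rowWeak
      intro i' j' h1 h2 x hx y hy
      by_cases hc1 : (i', j') = (i, j)
      · rw [Prod.mk.injEq] at hc1
        obtain ⟨rfl, rfl⟩ := hc1
        have hc2 : (i', j'+1) ≠ (i', j') := by simp
        rw [hmemne _ hc2] at hy
        have hpinr : T (i', j'+1) = {mval lam mu n (i', j'+1)} :=
          hpin _ h2 (Or.inr ⟨rfl, by omega⟩)
        rw [hpinr, Finset.mem_singleton] at hy
        subst hy
        rcases (hmemw x).mp hx with rfl | hx'
        · exact (hmrr h2).1
        · exact le_trans (le_of_lt (hTlt x hx')) (hmrr h2).1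
      · by_cases hc2 : (i', j'+1) = (i, j)
        · rw [Prod.mk.injEq] at hc2
          obtain ⟨rfl, hj2⟩ := hc2
          subst hj2
          rw [hmemne _ hc1] at hx
          rcases (hmemw y).mp hy with rfl | hy'
          · obtain ⟨z, hz⟩ := hT.1.cellNonempty _ hw
            have h4 := hT.1.rowWeak i' j' h1 hw x hx z hz
            have h5 := hTlt z hz
            omega
          · exact hT.1.rowWeak i' j' h1 h2 x hx y hy'
        · rw [hmemne _ hc1] at hx
          rw [hmemne _ hc2] at hy
          exact hT.1.rowWeak i' j' h1 h2 x hx y hy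
    · -- colWeak
      intro i' j' h1 h2 x hx y hy
      by_cases hc1 : (i', j') = (i, j)
      · rw [Prod.mk.injEq] at hc1
        obtain ⟨rfl, rfl⟩ := hc1
        have hc2 : (i'+1, j') ≠ (i', j') := by simp
        rw [hmemne _ hc2] at hy
        have hpinb : T (i'+1, j') = {mval lam mu n (i'+1, j')} :=
          hpin _ h2 (Or.inl (by omega))
        rw [hpinb, Finset.mem_singleton] at hy
        subst hy
        rcases (hmemw x).mp hx with rfl | hx'
        · exact (hmbb h2).1
        · exact le_trans (le_of_lt (hTlt x hx')) (hmbb h2).1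
      · by_cases hc2 : (i'+1, j') = (i, j)
        · rw [Prod.mk.injEq] at hc2
          obtain ⟨hi2, rfl⟩ := hc2
          subst hi2
          rw [hmemne _ hc1] at hx
          rcases (hmemw y).mp hy with rfl | hy'
          · obtain ⟨z, hz⟩ := hT.1.cellNonempty _ hw
            have h4 := hT.1.colWeak i' j' h1 hw x hx z hz
            have h5 := hTlt z hz
            omega
          · exact hT.1.colWeak i' j' h1 h2 x hx y hy'
        · rw [hmemne _ hc1] at hx
          rw [hmemne _ hc2] at hy
          exact hT.1.colWeak i' j' h1 h2 x hx y hy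
    · -- colOnce
      intro x hxe i1 i2 j1 hx1 hx2
      by_cases hc1 : (i1, j1) = (i, j) <;> by_cases hc2 : (i2, j1) = (i, j)
      · have e1 : i1 = i := congrArg Prod.fst hc1
        have e2 : i2 = i := congrArg Prod.fst hc2
        omega
      · rw [Prod.mk.injEq] at hc1
        obtain ⟨rfl, rfl⟩ := hc1
        rw [hmemne _ hc2] at hx2
        have hcell2 : (i2, j1) ∈ sCells lam mu := cell_of_mem hT hx2
        rcases (hmemw x).mp hx1 with rfl | hx1'
        · have hii : i2 ≠ i1 := fun h => hc2 (by rw [h])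
          rcases Nat.lt_or_ge i1 i2 with hlt | hge
          · have hpin2 : T (i2, j1) = {mval lam mu n (i2, j1)} :=
              hpin _ hcell2 (Or.inl hlt)
            rw [hpin2, Finset.mem_singleton] at hx2
            have := (mval_col hl hm hF (i2 - i1 - 1) j1 i1 i2 (by omega) hw hcell2).2 (by rw [hm_def] at hx2; exact hx2)
            omega
          · obtain ⟨z, hz⟩ := hT.1.cellNonempty _ hw
            have hle := entry_col hl hm hT (i1 - i2 - 1) j1 i2 i1 (by omega) hcell2 hw
              _ hx2 z hz
            have := hTlt z hz
            omega
        · exact hT.1.colOnce x hxe i1 i2 j1 hx1' hx2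
      · rw [Prod.mk.injEq] at hc2
        obtain ⟨rfl, rfl⟩ := hc2
        rw [hmemne _ hc1] at hx1
        have hcell1 : (i1, j1) ∈ sCells lam mu := cell_of_mem hT hx1
        rcases (hmemw x).mp hx2 with rfl | hx2'
        · have hii : i1 ≠ i2 := fun h => hc1 (by rw [h])
          rcases Nat.lt_or_ge i2 i1 with hlt | hge
          · have hpin1 : T (i1, j1) = {mval lam mu n (i1, j1)} :=
              hpin _ hcell1 (Or.inl hlt)
            rw [hpin1, Finset.mem_singleton] at hx1
            have := (mval_col hl hm hF (i1 - i2 - 1) j1 i2 i1 (by omega) hw hcell1).2 (by rw [hm_def] at hx1; exact hx1)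
            omega
          · obtain ⟨z, hz⟩ := hT.1.cellNonempty _ hw
            have hle := entry_col hl hm hT (i2 - i1 - 1) j1 i1 i2 (by omega) hcell1 hw
              _ hx1 z hz
            have := hTlt z hz
            omega
        · exact hT.1.colOnce x hxe i1 i2 j1 hx1 hx2'
      · rw [hmemne _ hc1] at hx1
        rw [hmemne _ hc2] at hx2
        exact hT.1.colOnce x hxe i1 i2 j1 hx1 hx2
    · -- rowOnce
      intro x hxo i1 j1 j2 hx1 hx2
      by_cases hc1 : (i1, j1) = (i, j) <;> by_cases hc2 : (i1, j2) = (i, j)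
      · have e1 : j1 = j := congrArg Prod.snd hc1
        have e2 : j2 = j := congrArg Prod.snd hc2
        omega
      · rw [Prod.mk.injEq] at hc1
        obtain ⟨rfl, rfl⟩ := hc1
        rw [hmemne _ hc2] at hx2
        have hcell2 : (i1, j2) ∈ sCells lam mu := cell_of_mem hT hx2
        rcases (hmemw x).mp hx1 with rfl | hx1'
        · have hjj : j2 ≠ j1 := fun h => hc2 (by rw [h])
          rcases Nat.lt_or_ge j1 j2 with hlt | hge
          · have hpin2 : T (i1, j2) = {mval lam mu n (i1, j2)} :=
              hpin _ hcell2 (Or.inr ⟨rfl, hlt⟩)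
            rw [hpin2, Finset.mem_singleton] at hx2
            have := (mval_row hF (j2 - j1 - 1) j1 i1 j2 (by omega) hw hcell2).2 (by rw [hm_def] at hx2; exact hx2)
            omega
          · obtain ⟨z, hz⟩ := hT.1.cellNonempty _ hw
            have hle := entry_row hT (j1 - j2 - 1) j2 i1 j1 (by omega) hcell2 hw
              _ hx2 z hz
            have := hTlt z hz
            omega
        · exact hT.1.rowOnce x hxo i1 j1 j2 hx1' hx2
      · rw [Prod.mk.injEq] at hc2
        obtain ⟨rfl, rfl⟩ := hc2
        rw [hmemne _ hc1] at hx1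
        have hcell1 : (i1, j1) ∈ sCells lam mu := cell_of_mem hT hx1
        rcases (hmemw x).mp hx2 with rfl | hx2'
        · have hjj : j1 ≠ j2 := fun h => hc1 (by rw [h])
          rcases Nat.lt_or_ge j2 j1 with hlt | hge
          · have hpin1 : T (i1, j1) = {mval lam mu n (i1, j1)} :=
              hpin _ hcell1 (Or.inr ⟨rfl, hlt⟩)
            rw [hpin1, Finset.mem_singleton] at hx1
            have := (mval_row hF (j1 - j2 - 1) j2 i1 j1 (by omega) hw hcell1).2 (by rw [hm_def] at hx1; exact hx1)
            omega
          · obtain ⟨z, hz⟩ := hT.1.cellNonempty _ hw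
            have hle := entry_row hT (j2 - j1 - 1) j1 i1 j2 (by omega) hcell1 hw
              _ hx1 z hz
            have := hTlt z hz
            omega
        · exact hT.1.rowOnce x hxo i1 j1 j2 hx1 hx2'
      · rw [hmemne _ hc1] at hx1
        rw [hmemne _ hc2] at hx2
        exact hT.1.rowOnce x hxo i1 j1 j2 hx1 hx2
  · -- P-condition
    intro i' x hx
    by_cases hc : ((i' : ℕ), (i' : ℕ)) = ((i : ℕ), (j : ℕ))
    · rw [Prod.mk.injEq] at hc
      obtain ⟨rfl, rfl⟩ := hc
      rcases (hmemw x).mp hx with rfl | hx'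
      · exact hmdiag rfl
      · exact hT.2 i' x hx'
    · rw [hmemne _ hc] at hx
      exact hT.2 i' x hx

end AddValid
end SkewOddAux

namespace SkewOddAux

noncomputable def TF (lam mu : List ℕ) (n : ℕ) : Finset (ℕ × ℕ → Finset ℕ) :=
  (Tset_finite lam mu n).toFinset

lemma mem_TF {lam mu : List ℕ} {n : ℕ} {T : ℕ × ℕ → Finset ℕ} :
    T ∈ TF lam mu n ↔ IsSSVTP lam mu n T := by
  unfold TF
  rw [Set.Finite.mem_toFinset]
  rfl

open Classical in
/-- intermediate filtered tableau sets in the reduction -/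
noncomputable def CF (lam mu : List ℕ) (n : ℕ) (W : Finset (ℕ × ℕ)) (w : ℕ × ℕ) (a : ℕ) :
    Finset (ℕ × ℕ → Finset ℕ) :=
  (TF lam mu n).filter (fun T =>
    (∀ u ∈ W, T u = {mval lam mu n u}) ∧
    (a < mval lam mu n w → T w = {mval lam mu n w}))

open Classical in
lemma mem_CF {lam mu : List ℕ} {n : ℕ} {W : Finset (ℕ × ℕ)} {w : ℕ × ℕ} {a : ℕ}
    {T : ℕ × ℕ → Finset ℕ} :
    T ∈ CF lam mu n W w a ↔ IsSSVTP lam mu n T ∧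
      (∀ u ∈ W, T u = {mval lam mu n u}) ∧
      (a < mval lam mu n w → T w = {mval lam mu n w}) := by
  unfold CF
  rw [Finset.mem_filter, mem_TF]

/-- linear key realizing reverse-lex processing order -/
def key (lam : List ℕ) (c : ℕ × ℕ) : ℕ := c.1 * BJ lam + c.2

lemma key_mono {lam : List ℕ} {u v : ℕ × ℕ} (hv2 : v.2 < BJ lam) (h : v.1 < u.1) :
    key lam v < key lam u := by
  have h1 : key lam v < (v.1 + 1) * BJ lam := by
    unfold key
    rw [Nat.succ_mul]
    omega
  have h2 : (v.1 + 1) * BJ lam ≤ u.1 * BJ lam := Nat.mul_le_mul_right _ h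
  have h3 : u.1 * BJ lam ≤ key lam u := by unfold key; omega
  omega

section StepB

variable {lam mu : List ℕ} {n : ℕ}
variable (hl : IsStrictPartition lam) (hm : IsStrictPartition mu)
variable (hF : ∀ w ∈ sCells lam mu, (Fset lam mu n w).Nonempty)

include hl in
lemma cell_snd_lt_BJ {u : ℕ × ℕ} (hu : u ∈ sCells lam mu) : u.2 < BJ lam := by
  obtain ⟨i, j⟩ := u
  have h1 := cell_j_bound lam mu hl hu
  have hBJ : BJ lam = lam.length + lam.foldr max 0 + 2 := rfl
  simp only at h1 ⊢
  omega

include hl in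
lemma key_lt_of_lex {u v : ℕ × ℕ} (hu : u ∈ sCells lam mu) (hv : v ∈ sCells lam mu)
    (h : v.1 < u.1 ∨ (v.1 = u.1 ∧ v.2 < u.2)) : key lam v < key lam u := by
  rcases h with h | ⟨h1, h2⟩
  · exact key_mono (cell_snd_lt_BJ hl hv) h
  · unfold key; rw [h1]; omega

include hl in
lemma key_inj {u v : ℕ × ℕ} (hu : u ∈ sCells lam mu) (hv : v ∈ sCells lam mu)
    (h : key lam u = key lam v) : u = v := by
  have hju := cell_snd_lt_BJ hl hu
  have hjv := cell_snd_lt_BJ hl hv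
  have h1 : u.1 = v.1 := by
    rcases Nat.lt_trichotomy u.1 v.1 with hlt | he | hgt
    · exact absurd (key_mono hju hlt) (by omega)
    · exact he
    · exact absurd (key_mono hjv hgt) (by omega)
  have h2 : u.2 = v.2 := by
    unfold key at h; rw [h1] at h; omega
  exact Prod.ext h1 h2

include hl hm hF in
open Classical in
/-- Lemma B : one toggle-reduction step pins letter `a` at the active cell -/
lemma stepB (W : Finset (ℕ × ℕ)) (i j : ℕ) (hwD : (i, j) ∈ sCells lam mu)
    (hwW : (i, j) ∉ W)
    (hmax : ∀ u ∈ sCells lam mu, u ∉ W → key lam u ≤ key lam (i, j))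
    (a : ℕ) (ha1 : 1 ≤ a) (ha2 : a ≤ 2*n) :
    (CF lam mu n W (i,j) a).filter (fun T => tog (i,j) a T ∉ CF lam mu n W (i,j) a) =
      CF lam mu n W (i,j) (a-1) := by
  classical
  have hup : ∀ u ∈ sCells lam mu, key lam (i,j) < key lam u → u ∈ W := by
    intro u hu hk
    by_contra hnW
    exact absurd (hmax u hu hnW) (by omega)
  have hpinlex : ∀ T : ℕ × ℕ → Finset ℕ, (∀ u ∈ W, T u = {mval lam mu n u}) →
      ∀ u ∈ sCells lam mu, i < u.1 ∨ (i = u.1 ∧ j < u.2) → T u = {mval lam mu n u} := by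
    intro T hp u hu hlex
    exact hp u (hup u hu (key_lt_of_lex hl hu hwD (by simpa using hlex)))
  rcases Nat.lt_trichotomy a (mval lam mu n (i, j)) with hcase | hcase | hcase
  · -- a < m : everything survives, condition unchanged
    ext T
    simp only [Finset.mem_filter, mem_CF]
    constructor
    · rintro ⟨⟨hT, hpin, hcond⟩, -⟩
      exact ⟨hT, hpin, fun _ => hcond hcase⟩
    · rintro ⟨hT, hpin, hcond⟩
      have hTw : T (i, j) = {mval lam mu n (i, j)} := hcond (by omega)
      refine ⟨⟨hT, hpin, fun _ => hTw⟩, ?_⟩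
      rintro ⟨-, -, hcond'⟩
      have h2 := hcond' hcase
      have h3 : a ∈ tog (i,j) a T (i,j) := by
        rw [tog_apply_self, hTw, symmDiff_singleton_not_mem (by simp; omega)]
        simp
      rw [h2] at h3
      simp at h3
      omega
  · -- a = m : survivors are exactly those with T w = {m}
    ext T
    simp only [Finset.mem_filter, mem_CF]
    constructor
    · rintro ⟨⟨hT, hpin, -⟩, htog⟩
      refine ⟨hT, hpin, fun _ => ?_⟩
      by_contra hne
      by_cases hmem : a ∈ T (i, j)
      · -- remove a : valid since another entry remains
        have hex : ∃ b ∈ T (i,j), b ≠ a := by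
          by_contra hall
          push_neg at hall
          apply hne
          rw [← hcase]
          ext b
          simp only [Finset.mem_singleton]
          constructor
          · exact fun hb => hall b hb
          · rintro rfl; exact hmem
        obtain ⟨b, hb, hbne⟩ := hex
        have hvalid : IsSSVTP lam mu n (tog (i,j) a T) := by
          have := shrink_valid hT hwD (Finset.erase_subset a (T (i,j)))
            ⟨b, Finset.mem_erase.mpr ⟨hbne, hb⟩⟩
          unfold tog
          rwa [← symmDiff_singleton_mem hmem] at this
        refine htog ⟨hvalid, ?_, fun h => absurd h (by omega)⟩
        intro u hu
        rw [tog_apply_ne _ _ _ (fun h => hwW (by rw [← h]; exact hu))]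
        exact hpin u hu
      · -- insert a = m : valid by add_valid
        have hvalid : IsSSVTP lam mu n (tog (i,j) a T) := by
          rw [hcase]
          exact add_valid hl hm hF hT hwD (hpinlex T hpin) (hcase ▸ hmem)
        refine htog ⟨hvalid, ?_, fun h => absurd h (by omega)⟩
        intro u hu
        rw [tog_apply_ne _ _ _ (fun h => hwW (by rw [← h]; exact hu))]
        exact hpin u hu
    · rintro ⟨hT, hpin, hcond⟩
      have hm1 : 1 ≤ mval lam mu n (i,j) := (mval_bounds hF hwD).1
      have hTw : T (i,j) = {mval lam mu n (i,j)} := hcond (by omega)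
      refine ⟨⟨hT, hpin, fun h => absurd h (by omega)⟩, ?_⟩
      rintro ⟨hvalid, -, -⟩
      obtain ⟨x, hx⟩ := hvalid.1.cellNonempty _ hwD
      rw [tog_apply_self, hTw, hcase,
        symmDiff_singleton_mem (Finset.mem_singleton_self _)] at hx
      simp at hx
  · -- a > m : insertion is invalid, condition vacuous
    ext T
    simp only [Finset.mem_filter, mem_CF]
    constructor
    · rintro ⟨⟨hT, hpin, -⟩, -⟩
      exact ⟨hT, hpin, fun h => absurd h (by omega)⟩
    · rintro ⟨hT, hpin, -⟩
      refine ⟨⟨hT, hpin, fun h => absurd h (by omega)⟩, ?_⟩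
      rintro ⟨hvalid, hpin', -⟩
      have hanot : a ∉ T (i,j) := fun hmem => by
        have := entry_le_mval hT hwD hmem
        omega
      have htogw : tog (i,j) a T (i,j) = insert a (T (i,j)) := by
        rw [tog_apply_self, symmDiff_singleton_not_mem hanot]
      have hatog : a ∈ tog (i,j) a T (i,j) := by rw [htogw]; simp
      have hnF : a ∉ Fset lam mu n (i,j) := fun hmem => by
        have := le_mval_of_mem hwD hmem
        omega
      rw [mem_Fset_iff] at hnF
      by_cases hd : (i = j → a % 2 = 0)
      · by_cases hr : ((i, j+1) ∈ sCells lam mu →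
            a ≤ mval lam mu n (i, j+1) ∧ ¬(a = mval lam mu n (i, j+1) ∧ a % 2 = 1))
        · by_cases hb : ((i+1, j) ∈ sCells lam mu →
              a ≤ mval lam mu n (i+1, j) ∧ ¬(a = mval lam mu n (i+1, j) ∧ a % 2 = 0))
          · exact hnF ⟨⟨ha1, ha2⟩, hd, hr, hb⟩
          · push_neg at hb
            obtain ⟨hbD, hbfail⟩ := hb
            have hbpin : tog (i,j) a T (i+1, j) = {mval lam mu n (i+1, j)} := by
              rw [tog_apply_ne _ _ _ (by simp)]
              exact hpinlex T hpin _ hbD (Or.inl (by omega))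
            by_cases hble : a ≤ mval lam mu n (i+1, j)
            · have heq : a = mval lam mu n (i+1, j) ∧ a % 2 = 0 := by tauto
              have hmem2 : a ∈ tog (i,j) a T (i+1, j) := by
                rw [hbpin, Finset.mem_singleton]; exact heq.1
              have := hvalid.1.colOnce a heq.2 i (i+1) j hatog hmem2
              omega
            · have hmem2 : mval lam mu n (i+1, j) ∈ tog (i,j) a T (i+1, j) := by
                rw [hbpin]; simp
              have := hvalid.1.colWeak i j hwD hbD a hatog _ hmem2
              omega
        · push_neg at hr
          obtain ⟨hrD, hrfail⟩ := hr
          have hrpin : tog (i,j) a T (i, j+1) = {mval lam mu n (i, j+1)} := by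
            rw [tog_apply_ne _ _ _ (by simp)]
            exact hpinlex T hpin _ hrD (Or.inr ⟨rfl, by omega⟩)
          by_cases hrle : a ≤ mval lam mu n (i, j+1)
          · have heq : a = mval lam mu n (i, j+1) ∧ a % 2 = 1 := by tauto
            have hmem2 : a ∈ tog (i,j) a T (i, j+1) := by
              rw [hrpin, Finset.mem_singleton]; exact heq.1
            have := hvalid.1.rowOnce a heq.2 i j (j+1) hatog hmem2
            omega
          · have hmem2 : mval lam mu n (i, j+1) ∈ tog (i,j) a T (i, j+1) := by
              rw [hrpin]; simp
            have := hvalid.1.rowWeak i j hwD hrD a hatog _ hmem2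
            omega
      · push_neg at hd
        obtain ⟨rfl, hodd⟩ := hd
        have := hvalid.2 i a hatog
        omega

end StepB
end SkewOddAux

namespace SkewOddAux

section Chain2

variable {lam mu : List ℕ} {n : ℕ}
variable (hl : IsStrictPartition lam) (hm : IsStrictPartition mu)
variable (hF : ∀ w ∈ sCells lam mu, (Fset lam mu n w).Nonempty)

include hl hm hF in
lemma innerChain (W : Finset (ℕ × ℕ)) (i j : ℕ) (hwD : (i, j) ∈ sCells lam mu)
    (hwW : (i, j) ∉ W)
    (hmax : ∀ u ∈ sCells lam mu, u ∉ W → key lam u ≤ key lam (i, j)) :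
    ∀ a : ℕ, (CF lam mu n W (i,j) a).card % 2 = (CF lam mu n W (i,j) 0).card % 2 := by
  intro a
  induction a with
  | zero => rfl
  | succ a ih =>
    by_cases hle : a + 1 ≤ 2*n
    · have hstep := stepB hl hm hF W i j hwD hwW hmax (a+1) (by omega) hle
      simp only [Nat.add_sub_cancel] at hstep
      have hpar := parity_step (tog (i,j) (a+1)) (CF lam mu n W (i,j) (a+1))
        (fun T _ _ => tog_tog _ _ T) (fun T _ => tog_ne _ _ T)
      rw [hstep] at hpar
      rw [hpar]
      exact ih
    · have hmle : mval lam mu n (i,j) ≤ 2*n := (mval_bounds hF hwD).2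
      have heq : CF lam mu n W (i,j) (a+1) = CF lam mu n W (i,j) a := by
        ext T
        simp only [mem_CF]
        constructor
        · rintro ⟨hT, hpin, -⟩
          exact ⟨hT, hpin, fun h => absurd h (by omega)⟩
        · rintro ⟨hT, hpin, -⟩
          exact ⟨hT, hpin, fun h => absurd h (by omega)⟩
      rw [heq]
      exact ih

open Classical in
include hl hm hF in
lemma outerChain : ∀ k : ℕ, ∀ W : Finset (ℕ × ℕ), W ⊆ sCells lam mu →
    (∀ u ∈ sCells lam mu, u ∉ W → ∀ v ∈ W, key lam u < key lam v) →
    (sCells lam mu \ W).card = k →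
    ((TF lam mu n).filter (fun T => ∀ u ∈ W, T u = {mval lam mu n u})).card % 2 = 1 := by
  intro k
  induction k with
  | zero =>
    intro W hWD hfin hcard
    have hsub : sCells lam mu ⊆ W :=
      (Finset.sdiff_eq_empty_iff_subset).mp (Finset.card_eq_zero.mp hcard)
    have heq : (TF lam mu n).filter (fun T => ∀ u ∈ W, T u = {mval lam mu n u}) =
        {Tmax lam mu n} := by
      ext T
      rw [Finset.mem_filter, mem_TF, Finset.mem_singleton]
      constructor
      · rintro ⟨hT, hpin⟩
        funext c
        by_cases hc : c ∈ sCells lam mu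
        · rw [hpin c (hsub hc), Tmax_apply_mem hc]
        · rw [hT.1.support c hc, Tmax_apply_notMem hc]
      · rintro rfl
        refine ⟨Tmax_valid hl hm hF, fun u hu => Tmax_apply_mem (hWD hu)⟩
    rw [heq, Finset.card_singleton]
  | succ k ih =>
    intro W hWD hfin hcard
    have hne : (sCells lam mu \ W).Nonempty := by
      rw [← Finset.card_pos, hcard]; omega
    obtain ⟨w, hwmem, hwmax⟩ := Finset.exists_max_image (sCells lam mu \ W) (key lam) hne
    rw [Finset.mem_sdiff] at hwmem
    obtain ⟨hwD, hwW⟩ := hwmem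
    have hmax : ∀ u ∈ sCells lam mu, u ∉ W → key lam u ≤ key lam w := by
      intro u hu hnW
      exact hwmax u (Finset.mem_sdiff.mpr ⟨hu, hnW⟩)
    obtain ⟨i, j⟩ := w
    -- step 1 : the pinned filter equals CF at level 2n
    have hstep1 : (TF lam mu n).filter (fun T => ∀ u ∈ W, T u = {mval lam mu n u}) =
        CF lam mu n W (i,j) (2*n) := by
      ext T
      rw [Finset.mem_filter, mem_TF, mem_CF]
      have hmle : mval lam mu n (i,j) ≤ 2*n := (mval_bounds hF hwD).2
      constructor
      · rintro ⟨hT, hpin⟩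
        exact ⟨hT, hpin, fun h => absurd h (by omega)⟩
      · rintro ⟨hT, hpin, -⟩
        exact ⟨hT, hpin⟩
    -- step 3 : CF at level 0 equals the pinned filter for insert w W
    have hstep3 : CF lam mu n W (i,j) 0 =
        (TF lam mu n).filter (fun T => ∀ u ∈ insert (i,j) W, T u = {mval lam mu n u}) := by
      ext T
      rw [Finset.mem_filter, mem_TF, mem_CF]
      have hm1 : 1 ≤ mval lam mu n (i,j) := (mval_bounds hF hwD).1
      constructor
      · rintro ⟨hT, hpin, hcond⟩
        refine ⟨hT, fun u hu => ?_⟩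
        rcases Finset.mem_insert.mp hu with rfl | hu'
        · exact hcond (by omega)
        · exact hpin u hu'
      · rintro ⟨hT, hpin⟩
        exact ⟨hT, fun u hu => hpin u (Finset.mem_insert_of_mem hu),
          fun _ => hpin (i,j) (Finset.mem_insert_self _ _)⟩
    rw [hstep1, innerChain hl hm hF W i j hwD hwW hmax (2*n), hstep3]
    apply ih (insert (i,j) W)
    · intro u hu
      rcases Finset.mem_insert.mp hu with rfl | hu'
      · exact hwD
      · exact hWD hu'
    · intro u hu hnW' v hv
      rcases Finset.mem_insert.mp hv with hveq | hv'
      · subst hveq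
        have h1 : u ∉ W := fun h => hnW' (Finset.mem_insert_of_mem h)
        have h2 : u ≠ (i, j) := fun h => hnW' (h ▸ Finset.mem_insert_self _ _)
        have h3 := hmax u hu h1
        rcases Nat.lt_or_ge (key lam u) (key lam (i, j)) with h | h
        · exact h
        · exact absurd (key_inj hl hu hwD (by omega)) h2
      · exact hfin u hu (fun h => hnW' (Finset.mem_insert_of_mem h)) v hv'
    · have : sCells lam mu \ insert (i,j) W = (sCells lam mu \ W).erase (i,j) := by
        ext c
        simp only [Finset.mem_sdiff, Finset.mem_erase, Finset.mem_insert]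
        tauto
      rw [this, Finset.card_erase_of_mem (Finset.mem_sdiff.mpr ⟨hwD, hwW⟩), hcard]
      omega

end Chain2
end SkewOddAux

open SkewOddAux in
/-- for strict partitions `μ ⊆ λ`, the number of shifted skew
set-valued semistandard P-tableaux of shape `λ/μ` in `n` letters is odd
(whenever there is at least one). -/
theorem skew_ssvtP_card_odd (lam mu : List ℕ) (n : ℕ)
    (hl : IsStrictPartition lam) (hm : IsStrictPartition mu)
    (hsub : SubPartition mu lam)
    (hne : {T : ℕ × ℕ → Finset ℕ | IsSSVTP lam mu n T}.Nonempty) :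
    Odd {T : ℕ × ℕ → Finset ℕ | IsSSVTP lam mu n T}.ncard := by
  classical
  obtain ⟨T₀, hT₀⟩ := hne
  have hT₀' : IsSSVTP lam mu n T₀ := hT₀
  have hF := Fset_nonempty_of_tableau hT₀'
  have h := outerChain hl hm hF (sCells lam mu).card ∅ (Finset.empty_subset _)
    (by intro u _ _ v hv; exact absurd hv (Finset.notMem_empty v)) (by simp)
  have hfilter : (TF lam mu n).filter
      (fun T => ∀ u ∈ (∅ : Finset (ℕ × ℕ)), T u = {mval lam mu n u}) = TF lam mu n :=
    Finset.filter_true_of_mem (fun T _ => fun u hu => absurd hu (Finset.notMem_empty u))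
  rw [hfilter] at h
  have hncard : {T : ℕ × ℕ → Finset ℕ | IsSSVTP lam mu n T}.ncard = (TF lam mu n).card := by
    rw [← Set.ncard_coe_finset]
    congr 1
    unfold TF
    rw [Set.Finite.coe_toFinset]
  rw [hncard]
  exact Nat.odd_iff.mpr h
end

section
/- For any strict partitions μ ⊆ λ and suitable n, the number of shifted skew set-valued semistandard tableaux of Q-type of shape λ/μ in n letters is odd. -/
open Finset

lemma SQle_foldr_max {l : List ℕ} {x : ℕ} (hx : x ∈ l) : x ≤ l.foldr max 0 := by
  induction l with
  | nil => simp at hx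
  | cons a t ih =>
    rcases List.mem_cons.mp hx with h | h
    · subst h; exact le_max_left _ _
    · exact le_trans (ih h) (le_max_right _ _)

lemma SQgetD_le_foldr (l : List ℕ) (k : ℕ) : l.getD k 0 ≤ l.foldr max 0 := by
  by_cases h : k < l.length
  · rw [List.getD_eq_getElem l 0 h]; exact SQle_foldr_max (l.getElem_mem h)
  · rw [List.getD_eq_default l 0 (le_of_not_gt h)]; exact Nat.zero_le _

lemma SQmem_sCells {lam mu : List ℕ} {c : ℕ × ℕ} :
    c ∈ sCells lam mu ↔ 1 ≤ c.1 ∧ c.1 ≤ lam.length ∧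
      mu.getD (c.1 - 1) 0 + c.1 ≤ c.2 ∧ c.2 ≤ lam.getD (c.1 - 1) 0 + c.1 - 1 := by
  constructor
  · intro h
    exact (Finset.mem_filter.mp h).2
  · intro h
    refine Finset.mem_filter.mpr ⟨Finset.mem_product.mpr ⟨?_, ?_⟩, h⟩
    · exact Finset.mem_range.mpr (by omega)
    · refine Finset.mem_range.mpr ?_
      have := SQgetD_le_foldr lam (c.1 - 1)
      omega

lemma SQpos {lam mu : List ℕ} {c : ℕ × ℕ} (hc : c ∈ sCells lam mu) :
    1 ≤ c.1 ∧ c.1 ≤ c.2 := by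
  have h := SQmem_sCells.mp hc
  omega

lemma SQsnd_lt {lam mu : List ℕ} {c : ℕ × ℕ} (hc : c ∈ sCells lam mu) :
    c.2 < lam.length + lam.foldr max 0 + 1 := by
  have := Finset.mem_range.mp (Finset.mem_product.mp (Finset.mem_filter.mp hc).1).2
  exact this

lemma SQsp_step {l : List ℕ} (h : l.Chain' (· > ·)) {k : ℕ} (hk : k + 1 < l.length) :
    l.getD (k+1) 0 < l.getD k 0 := by
  rw [List.getD_eq_getElem l 0 hk, List.getD_eq_getElem l 0 (by omega)]
  exact List.isChain_iff_getElem.mp h k (by omega)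

lemma SQsp_getD {l : List ℕ} (h : l.Chain' (· > ·)) {a b : ℕ} (hab : a ≤ b)
    (hb : b < l.length) : l.getD b 0 + (b - a) ≤ l.getD a 0 := by
  obtain ⟨d, rfl⟩ := Nat.exists_eq_add_of_le hab
  induction d with
  | zero => simp
  | succ d ih =>
    have h1 : l.getD (a + d + 1) 0 < l.getD (a + d) 0 := SQsp_step h (by omega)
    have h2 := ih (by omega) (by omega)
    simp only [← Nat.add_assoc] at *
    omega

lemma SQrowContig {lam mu : List ℕ} {i j j' j'' : ℕ} (hc : (i, j) ∈ sCells lam mu)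
    (hc'' : (i, j'') ∈ sCells lam mu) (h1 : j ≤ j') (h2 : j' ≤ j'') :
    (i, j') ∈ sCells lam mu := by
  have a := SQmem_sCells.mp hc
  have b := SQmem_sCells.mp hc''
  exact SQmem_sCells.mpr (by simp_all; omega)

lemma SQcolContig {lam mu : List ℕ} (hl : IsStrictPartition lam)
    (hm : IsStrictPartition mu) {i i'' j : ℕ} (hc : (i, j) ∈ sCells lam mu)
    (hc'' : (i'', j) ∈ sCells lam mu) (h : i < i'') :
    (i + 1, j) ∈ sCells lam mu := by
  have a := SQmem_sCells.mp hc
  have b := SQmem_sCells.mp hc''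
  simp only [Prod.fst, Prod.snd] at a b
  refine SQmem_sCells.mpr ?_
  simp only [Prod.fst, Prod.snd]
  have hLlen : i'' - 1 < lam.length := by omega
  have hLam : lam.getD (i'' - 1) 0 + (i'' - 1 - (i+1-1)) ≤ lam.getD (i+1-1) 0 :=
    SQsp_getD hl.1 (by omega) hLlen
  constructor
  · omega
  constructor
  · omega
  constructor
  · -- mu side
    by_cases hmu : i < mu.length
    · have := SQsp_step hm.1 (k := i - 1) (by omega)
      have hii : i - 1 + 1 = i := by omega
      rw [hii] at this
      have h1 : i + 1 - 1 = i := by omega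
      rw [h1]
      omega
    · rw [List.getD_eq_default mu 0 (by omega)]
      omega
  · omega

lemma SQcolChain {lam mu : List ℕ} (hl : IsStrictPartition lam)
    (hm : IsStrictPartition mu) {i i'' j : ℕ} (hc : (i, j) ∈ sCells lam mu)
    (hc'' : (i'', j) ∈ sCells lam mu) :
    ∀ k, i ≤ k → k ≤ i'' → (k, j) ∈ sCells lam mu := by
  intro k hik hki
  obtain ⟨d, rfl⟩ := Nat.exists_eq_add_of_le hik
  clear hik
  induction d with
  | zero => simpa using hc
  | succ d ih =>
    have hprev : (i + d, j) ∈ sCells lam mu := ih (by omega)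
    have : (i + d + 1, j) ∈ sCells lam mu := SQcolContig hl hm hprev hc'' (by omega)
    simpa [Nat.add_assoc] using this

def SQvm (lam mu : List ℕ) : ℕ × ℕ → ℕ := fun c =>
  max
    (if h : (c.1, c.2 - 1) ∈ sCells lam mu then
      SQvm lam mu (c.1, c.2 - 1) + SQvm lam mu (c.1, c.2 - 1) % 2 else 1)
    (if h : (c.1 - 1, c.2) ∈ sCells lam mu then
      SQvm lam mu (c.1 - 1, c.2) + (1 - SQvm lam mu (c.1 - 1, c.2) % 2) else 1)
termination_by c => c.1 + c.2
decreasing_by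
  · have := SQpos h; simp at this ⊢; omega
  · have := SQpos h; simp at this ⊢; omega

lemma SQvm_def (lam mu : List ℕ) (c : ℕ × ℕ) : SQvm lam mu c =
  max
    (if (c.1, c.2 - 1) ∈ sCells lam mu then
      SQvm lam mu (c.1, c.2 - 1) + SQvm lam mu (c.1, c.2 - 1) % 2 else 1)
    (if (c.1 - 1, c.2) ∈ sCells lam mu then
      SQvm lam mu (c.1 - 1, c.2) + (1 - SQvm lam mu (c.1 - 1, c.2) % 2) else 1) := by
  rw [SQvm]
  simp only [dite_eq_ite]

lemma SQvm_left {lam mu : List ℕ} {i j : ℕ} (h : (i, j) ∈ sCells lam mu) :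
    SQvm lam mu (i, j) + SQvm lam mu (i, j) % 2 ≤ SQvm lam mu (i, j + 1) := by
  rw [SQvm_def lam mu (i, j + 1)]
  simp only [Nat.add_sub_cancel]
  rw [if_pos h]
  exact le_max_left _ _

lemma SQvm_above {lam mu : List ℕ} {i j : ℕ} (h : (i, j) ∈ sCells lam mu) :
    SQvm lam mu (i, j) + (1 - SQvm lam mu (i, j) % 2) ≤ SQvm lam mu (i + 1, j) := by
  rw [SQvm_def lam mu (i + 1, j)]
  simp only [Nat.add_sub_cancel]
  rw [if_pos h]
  exact le_max_right _ _

lemma SQvm_pos (lam mu : List ℕ) : ∀ c : ℕ × ℕ, 1 ≤ SQvm lam mu c := by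
  have H : ∀ m : ℕ, ∀ c : ℕ × ℕ, c.1 + c.2 ≤ m → 1 ≤ SQvm lam mu c := by
    intro m
    induction m with
    | zero =>
      intro c hc
      rw [SQvm_def]
      split_ifs with h1 h2 h2
      · have := SQpos h1; simp at this; omega
      · have := SQpos h1; simp at this; omega
      · have := SQpos h2; simp at this; omega
      · simp
    | succ m ih =>
      intro c hc
      rw [SQvm_def]
      rcases Nat.lt_or_ge 1 c.2 with h | h
      · refine le_trans ?_ (le_max_left _ _)
        split_ifs with h1
        · have := ih (c.1, c.2 - 1) (by simp; omega)
          omega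
        · simp
      · -- c.2 ≤ 1 : left cell not in S? (c.1, c.2-1): c.2-1 = 0 < 1 so not in S
        refine le_trans ?_ (le_max_right _ _)
        split_ifs with h1
        · have := ih (c.1 - 1, c.2) (by have := SQpos h1; simp at this ⊢; omega)
          omega
        · simp
  intro c; exact H (c.1 + c.2) c le_rfl

lemma SQrowMono {lam mu : List ℕ} {i j j'' : ℕ} (hc : (i, j) ∈ sCells lam mu)
    (hc'' : (i, j'') ∈ sCells lam mu) (h : j ≤ j'') :
    SQvm lam mu (i, j) ≤ SQvm lam mu (i, j'') := by
  obtain ⟨d, rfl⟩ := Nat.exists_eq_add_of_le h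
  induction d with
  | zero => simp
  | succ d ih =>
    have hmid : (i, j + d) ∈ sCells lam mu := SQrowContig hc hc'' (by omega) (by omega)
    have h1 := ih (SQrowContig hc hc'' (by omega) (by omega))
    have h2 := SQvm_left hmid
    have he : j + d + 1 = j + (d + 1) := by omega
    rw [he] at h2
    omega

lemma SQcolMono {lam mu : List ℕ} (hl : IsStrictPartition lam) (hm : IsStrictPartition mu)
    {i i'' j : ℕ} (hc : (i, j) ∈ sCells lam mu)
    (hc'' : (i'', j) ∈ sCells lam mu) (h : i ≤ i'') :
    SQvm lam mu (i, j) ≤ SQvm lam mu (i'', j) := by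
  obtain ⟨d, rfl⟩ := Nat.exists_eq_add_of_le h
  induction d with
  | zero => simp
  | succ d ih =>
    have hmid : (i + d, j) ∈ sCells lam mu := SQcolChain hl hm hc hc'' (i + d) (by omega) (by omega)
    have h1 := ih (SQcolChain hl hm hc hc'' (i + d) (by omega) (by omega))
    have h2 := SQvm_above hmid
    have he : i + d + 1 = i + (d + 1) := by omega
    rw [he] at h2
    omega

lemma SQmemS {lam mu : List ℕ} {n : ℕ} {T : ℕ × ℕ → Finset ℕ} (hT : IsSSVTQ lam mu n T)
    {c : ℕ × ℕ} {a : ℕ} (ha : a ∈ T c) : c ∈ sCells lam mu := by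
  by_contra h
  rw [hT.support c h] at ha
  simp at ha

lemma SQlower {lam mu : List ℕ} {n : ℕ} {T : ℕ × ℕ → Finset ℕ} (hT : IsSSVTQ lam mu n T) :
    ∀ c : ℕ × ℕ, ∀ a ∈ T c, SQvm lam mu c ≤ a := by
  have H : ∀ m : ℕ, ∀ c : ℕ × ℕ, c.1 + c.2 ≤ m → ∀ a ∈ T c, SQvm lam mu c ≤ a := by
    intro m
    induction m with
    | zero =>
      intro c hc a ha
      have hcS := SQmemS hT ha
      have := SQpos hcS
      omega
    | succ m ih =>
      intro c hc a ha
      obtain ⟨i, j⟩ := c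
      have hcS : (i, j) ∈ sCells lam mu := SQmemS hT ha
      have hpos := SQpos hcS
      simp only at hpos hc
      rw [SQvm_def]
      simp only
      have hrange := hT.inRange (i, j) a ha
      refine max_le ?_ ?_
      · split_ifs with h1
        · -- left neighbour in shape
          have hjpos := (SQpos h1).2
          simp only at hjpos
          obtain ⟨x, hx⟩ := hT.cellNonempty _ h1
          have hvx : SQvm lam mu (i, j - 1) ≤ x := ih (i, j - 1) (by simp; omega) x hx
          have hxa : x ≤ a := by
            have hrw := hT.rowWeak i (j - 1) h1 (by rw [show j - 1 + 1 = j by omega]; exact hcS)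
            have : j - 1 + 1 = j := by omega
            rw [this] at hrw
            exact hrw x hx a ha
          set v := SQvm lam mu (i, j - 1) with hv
          rcases Nat.mod_two_eq_zero_or_one v with hpar | hpar
          · omega
          · -- v odd: show a ≠ v
            by_cases hav : a = v
            · exfalso
              have hxv : x = v := by omega
              have h2 : a ∈ T (i, j - 1) := by rw [hav, ← hxv]; exact hx
              have := hT.rowOnce a (by omega) i (j - 1) j h2 ha
              omega
            · omega
        · omega
      · split_ifs with h1
        · have hipos := (SQpos h1).1
          simp only at hipos
          obtain ⟨x, hx⟩ := hT.cellNonempty _ h1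
          have hvx : SQvm lam mu (i - 1, j) ≤ x := ih (i - 1, j) (by simp; omega) x hx
          have hxa : x ≤ a := by
            have hcw := hT.colWeak (i - 1) j h1 (by rw [show i - 1 + 1 = i by omega]; exact hcS)
            have : i - 1 + 1 = i := by omega
            rw [this] at hcw
            exact hcw x hx a ha
          set v := SQvm lam mu (i - 1, j) with hv
          rcases Nat.mod_two_eq_zero_or_one v with hpar | hpar
          · by_cases hav : a = v
            · exfalso
              have hxv : x = v := by omega
              have h2 : a ∈ T (i - 1, j) := by rw [hav, ← hxv]; exact hx
              have := hT.colOnce a (by omega) (i - 1) i j h2 ha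
              omega
            · omega
          · omega
        · omega
  intro c a ha
  exact H (c.1 + c.2) c le_rfl a ha

lemma SQrowWeakChain {lam mu : List ℕ} {n : ℕ} {T : ℕ × ℕ → Finset ℕ}
    (hT : IsSSVTQ lam mu n T) {i j j'' a b : ℕ} (h : j < j'')
    (hc : (i, j) ∈ sCells lam mu) (hc'' : (i, j'') ∈ sCells lam mu)
    (ha : a ∈ T (i, j)) (hb : b ∈ T (i, j'')) : a ≤ b := by
  obtain ⟨d, rfl⟩ := Nat.exists_eq_add_of_le (Nat.succ_le_of_lt h)
  clear h
  induction d generalizing b with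
  | zero =>
    have := hT.rowWeak i j hc (by simpa using hc'') a ha
    simpa using this _ (by simpa using hb)
  | succ d ih =>
    have hmid : (i, j + 1 + d) ∈ sCells lam mu := SQrowContig hc hc'' (by omega) (by omega)
    obtain ⟨x, hx⟩ := hT.cellNonempty _ hmid
    have h1 : a ≤ x := ih hmid hx
    have h2 : x ≤ b := by
      have := hT.rowWeak i (j + 1 + d) hmid (by rw [show j + 1 + d + 1 = j + 1 + (d+1) by omega]; exact hc'') x hx
      have := this b (by rw [show j + 1 + d + 1 = j + 1 + (d+1) by omega]; exact hb)
      exact this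
    omega

lemma SQcolWeakChain {lam mu : List ℕ} {n : ℕ} {T : ℕ × ℕ → Finset ℕ}
    (hl : IsStrictPartition lam) (hm : IsStrictPartition mu)
    (hT : IsSSVTQ lam mu n T) {i i'' j a b : ℕ} (h : i < i'')
    (hc : (i, j) ∈ sCells lam mu) (hc'' : (i'', j) ∈ sCells lam mu)
    (ha : a ∈ T (i, j)) (hb : b ∈ T (i'', j)) : a ≤ b := by
  obtain ⟨d, rfl⟩ := Nat.exists_eq_add_of_le (Nat.succ_le_of_lt h)
  clear h
  induction d generalizing b with
  | zero =>
    have := hT.colWeak i j hc (by simpa using hc'') a ha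
    simpa using this _ (by simpa using hb)
  | succ d ih =>
    have hmid : (i + 1 + d, j) ∈ sCells lam mu :=
      SQcolChain hl hm hc hc'' _ (by omega) (by omega)
    obtain ⟨x, hx⟩ := hT.cellNonempty _ hmid
    have h1 : a ≤ x := ih hmid hx
    have h2 : x ≤ b := by
      have := hT.colWeak (i + 1 + d) j hmid (by rw [show i + 1 + d + 1 = i + 1 + (d+1) by omega]; exact hc'') x hx
      exact this b (by rw [show i + 1 + d + 1 = i + 1 + (d+1) by omega]; exact hb)
    omega

lemma SQvm_le {lam mu : List ℕ} {n : ℕ} {T : ℕ × ℕ → Finset ℕ} (hT : IsSSVTQ lam mu n T)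
    {c : ℕ × ℕ} (hc : c ∈ sCells lam mu) : SQvm lam mu c ≤ 2 * n := by
  obtain ⟨a, ha⟩ := hT.cellNonempty c hc
  exact le_trans (SQlower hT c a ha) (hT.inRange c a ha).2

/-- The minimal tableau. -/
def SQTm (lam mu : List ℕ) : ℕ × ℕ → Finset ℕ := fun c =>
  if c ∈ sCells lam mu then {SQvm lam mu c} else ∅

lemma SQTm_valid {lam mu : List ℕ} {n : ℕ} (hl : IsStrictPartition lam)
    (hm : IsStrictPartition mu)
    (h2n : ∀ c ∈ sCells lam mu, SQvm lam mu c ≤ 2 * n) :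
    IsSSVTQ lam mu n (SQTm lam mu) := by
  constructor
  · intro c hc; simp [SQTm, hc]
  · intro c hc; simp [SQTm, hc]
  · intro c a ha
    simp only [SQTm] at ha
    split_ifs at ha with hc
    · simp at ha
      subst ha
      exact ⟨SQvm_pos lam mu c, h2n c hc⟩
    · simp at ha
  · intro i j hc hc' a ha b hb
    simp only [SQTm, if_pos hc, if_pos hc'] at ha hb
    simp at ha hb
    subst ha; subst hb
    have := SQvm_left hc
    omega
  · intro i j hc hc' a ha b hb
    simp only [SQTm, if_pos hc, if_pos hc'] at ha hb
    simp at ha hb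
    subst ha; subst hb
    have := SQvm_above hc
    omega
  · intro a hpar i i' j ha ha'
    by_contra hne
    simp only [SQTm] at ha ha'
    split_ifs at ha ha' with hc hc'
    · simp at ha ha'
      -- wlog i < i'
      rcases Nat.lt_or_ge i i' with h | h
      · have hnext : (i + 1, j) ∈ sCells lam mu := SQcolContig hl hm hc hc' h
        have h1 := SQvm_above hc
        have h2 := SQcolMono hl hm hnext hc' (by omega)
        omega
      · have h' : i' < i := by omega
        have hnext : (i' + 1, j) ∈ sCells lam mu := SQcolContig hl hm hc' hc h'
        have h1 := SQvm_above hc'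
        have h2 := SQcolMono hl hm hnext hc (by omega)
        omega
    · simp at ha'
    · simp at ha
    · simp at ha
  · intro a hpar i j j' ha ha'
    by_contra hne
    simp only [SQTm] at ha ha'
    split_ifs at ha ha' with hc hc'
    · simp at ha ha'
      rcases Nat.lt_or_ge j j' with h | h
      · have hnext : (i, j + 1) ∈ sCells lam mu := SQrowContig hc hc' (by omega) (by omega)
        have h1 := SQvm_left hc
        have h2 := SQrowMono hnext hc' (by omega)
        omega
      · have h' : j' < j := by omega
        have hnext : (i, j' + 1) ∈ sCells lam mu := SQrowContig hc' hc (by omega) (by omega)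
        have h1 := SQvm_left hc'
        have h2 := SQrowMono hnext hc (by omega)
        omega
    · simp at ha'
    · simp at ha
    · simp at ha

lemma SQadd_valid {lam mu : List ℕ} {n : ℕ} {T : ℕ × ℕ → Finset ℕ}
    (hl : IsStrictPartition lam) (hm : IsStrictPartition mu)
    (hT : IsSSVTQ lam mu n T) {i₀ j₀ : ℕ} (hS0 : (i₀, j₀) ∈ sCells lam mu)
    (hmin : ∀ i j, (i, j) ∈ sCells lam mu → (i < i₀ ∨ (i = i₀ ∧ j < j₀)) →
      T (i, j) = {SQvm lam mu (i, j)})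
    (hv : SQvm lam mu (i₀, j₀) ∉ T (i₀, j₀)) :
    IsSSVTQ lam mu n (Function.update T (i₀, j₀) (insert (SQvm lam mu (i₀, j₀)) (T (i₀, j₀)))) := by
  set v₀ := SQvm lam mu (i₀, j₀) with hv₀
  set T' := Function.update T (i₀, j₀) (insert v₀ (T (i₀, j₀))) with hT'
  have hmem : ∀ c : ℕ × ℕ, ∀ a, a ∈ T' c ↔ (c = (i₀, j₀) ∧ a = v₀) ∨ a ∈ T c := by
    intro c a
    by_cases hc : c = (i₀, j₀)
    · subst hc
      simp only [hT', Function.update_self, Finset.mem_insert]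
      tauto
    · simp only [hT', Function.update_of_ne hc]
      tauto
  have hgt : ∀ x ∈ T (i₀, j₀), v₀ + 1 ≤ x := by
    intro x hx
    have h1 := SQlower hT _ x hx
    rcases Nat.lt_or_ge v₀ x with h | h
    · omega
    · exfalso
      have : x = v₀ := by omega
      rw [this] at hx; exact hv hx
  have hne0 := hT.cellNonempty _ hS0
  have hpos0 := SQpos hS0
  constructor
  · intro c hc
    have hcc : c ≠ (i₀, j₀) := by rintro rfl; exact hc hS0
    rw [hT', Function.update_of_ne hcc]
    exact hT.support c hc
  · intro c hc
    by_cases h : c = (i₀, j₀)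
    · subst h; rw [hT', Function.update_self]; exact Finset.insert_nonempty _ _
    · rw [hT', Function.update_of_ne h]; exact hT.cellNonempty c hc
  · intro c a ha
    rcases (hmem c a).mp ha with ⟨hc, rfl⟩ | h
    · subst hc
      exact ⟨SQvm_pos lam mu _, SQvm_le hT hS0⟩
    · exact hT.inRange c a h
  · -- rowWeak
    intro i j hc hc' a ha b hb
    rcases (hmem _ a).mp ha with ⟨he, rfl⟩ | ha'
    · rw [Prod.mk.injEq] at he
      obtain ⟨rfl, rfl⟩ := he
      have hbT : b ∈ T (i, j + 1) := by
        rcases (hmem _ b).mp hb with ⟨hb2, rfl⟩ | h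
        · rw [Prod.mk.injEq] at hb2; omega
        · exact h
      have h1 := SQlower hT _ b hbT
      have h2 := SQvm_left hc
      omega
    · rcases (hmem _ b).mp hb with ⟨he, rfl⟩ | hb'
      · rw [Prod.mk.injEq] at he
        obtain ⟨rfl, he2⟩ := he
        have hminl : T (i, j) = {SQvm lam mu (i, j)} := hmin i j hc (by omega)
        rw [hminl] at ha'
        simp at ha'
        subst ha'
        have h1 := SQvm_left hc
        rw [he2] at h1
        omega
      · exact hT.rowWeak i j hc hc' a ha' b hb'
  · -- colWeak
    intro i j hc hc' a ha b hb
    rcases (hmem _ a).mp ha with ⟨he, rfl⟩ | ha'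
    · rw [Prod.mk.injEq] at he
      obtain ⟨rfl, rfl⟩ := he
      have hbT : b ∈ T (i + 1, j) := by
        rcases (hmem _ b).mp hb with ⟨hb2, rfl⟩ | h
        · rw [Prod.mk.injEq] at hb2; omega
        · exact h
      have h1 := SQlower hT _ b hbT
      have h2 := SQvm_above hc
      omega
    · rcases (hmem _ b).mp hb with ⟨he, rfl⟩ | hb'
      · rw [Prod.mk.injEq] at he
        obtain ⟨he1, rfl⟩ := he
        have hminl : T (i, j) = {SQvm lam mu (i, j)} := hmin i j hc (by omega)
        rw [hminl] at ha'
        simp at ha'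
        subst ha'
        have h1 := SQvm_above hc
        rw [he1] at h1
        omega
      · exact hT.colWeak i j hc hc' a ha' b hb'
  · -- colOnce
    intro a hpar i i' j ha ha'
    by_contra hii
    -- key sublemma: if v₀ even sits (old) at (i', j₀) with i' ≠ i₀ → False
    have key : ∀ k, k ≠ i₀ → v₀ % 2 = 0 → v₀ ∈ T (k, j₀) → False := by
      intro k hk hpar0 hkT
      have hkS : (k, j₀) ∈ sCells lam mu := SQmemS hT hkT
      rcases Nat.lt_or_ge k i₀ with hlt | hge
      · have hup : (i₀ - 1, j₀) ∈ sCells lam mu :=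
          SQcolChain hl hm hkS hS0 (i₀ - 1) (by omega) (by omega)
        have hTup : T (i₀ - 1, j₀) = {SQvm lam mu (i₀ - 1, j₀)} := hmin _ _ hup (by omega)
        set b := SQvm lam mu (i₀ - 1, j₀) with hb
        have hba : b + (1 - b % 2) ≤ v₀ := by
          have h1 := SQvm_above hup
          rw [show i₀ - 1 + 1 = i₀ by omega] at h1
          exact h1
        have hvb : v₀ ≤ b := by
          rcases Nat.lt_or_ge k (i₀ - 1) with h2 | h2
          · exact SQcolWeakChain hl hm hT h2 hkS hup hkT (by rw [hTup]; simp)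
          · have : k = i₀ - 1 := by omega
            rw [this, hTup] at hkT
            simp at hkT
            omega
        omega
      · have hgt' : i₀ < k := by omega
        obtain ⟨x, hx⟩ := hne0
        have h1 : x ≤ v₀ := SQcolWeakChain hl hm hT hgt' hS0 hkS hx hkT
        have h2 := hgt x hx
        omega
    rcases (hmem _ a).mp ha with ⟨he, rfl⟩ | haT
    · rw [Prod.mk.injEq] at he
      obtain ⟨rfl, rfl⟩ := he
      rcases (hmem _ v₀).mp ha' with ⟨he2, he3⟩ | ha'T
      · rw [Prod.mk.injEq] at he2; omega
      · exact key i' (by omega) hpar ha'T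
    · rcases (hmem _ a).mp ha' with ⟨he, rfl⟩ | ha'T
      · rw [Prod.mk.injEq] at he
        obtain ⟨rfl, rfl⟩ := he
        exact key i (by omega) hpar haT
      · exact hii (hT.colOnce a hpar i i' j haT ha'T)
  · -- rowOnce
    intro a hpar i j j' ha ha'
    by_contra hjj
    have key : ∀ k, k ≠ j₀ → v₀ % 2 = 1 → v₀ ∈ T (i₀, k) → False := by
      intro k hk hpar0 hkT
      have hkS : (i₀, k) ∈ sCells lam mu := SQmemS hT hkT
      rcases Nat.lt_or_ge k j₀ with hlt | hge
      · have hup : (i₀, j₀ - 1) ∈ sCells lam mu :=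
          SQrowContig hkS hS0 (by omega) (by omega)
        have hTup : T (i₀, j₀ - 1) = {SQvm lam mu (i₀, j₀ - 1)} := hmin _ _ hup (by omega)
        set b := SQvm lam mu (i₀, j₀ - 1) with hb
        have hba : b + b % 2 ≤ v₀ := by
          have h1 := SQvm_left hup
          rw [show j₀ - 1 + 1 = j₀ by omega] at h1
          exact h1
        have hvb : v₀ ≤ b := by
          rcases Nat.lt_or_ge k (j₀ - 1) with h2 | h2
          · exact SQrowWeakChain hT h2 hkS hup hkT (by rw [hTup]; simp)
          · have : k = j₀ - 1 := by omega
            rw [this, hTup] at hkT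
            simp at hkT
            omega
        omega
      · have hgt' : j₀ < k := by omega
        obtain ⟨x, hx⟩ := hne0
        have h1 : x ≤ v₀ := SQrowWeakChain hT hgt' hS0 hkS hx hkT
        have h2 := hgt x hx
        omega
    rcases (hmem _ a).mp ha with ⟨he, rfl⟩ | haT
    · rw [Prod.mk.injEq] at he
      obtain ⟨rfl, rfl⟩ := he
      rcases (hmem _ v₀).mp ha' with ⟨he2, he3⟩ | ha'T
      · rw [Prod.mk.injEq] at he2; omega
      · exact key j' (by omega) hpar ha'T
    · rcases (hmem _ a).mp ha' with ⟨he, rfl⟩ | ha'T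
      · rw [Prod.mk.injEq] at he
        obtain ⟨rfl, rfl⟩ := he
        exact key j (by omega) hpar haT
      · exact hjj (hT.rowOnce a hpar i j j' haT ha'T)

lemma SQremove_valid {lam mu : List ℕ} {n : ℕ} {T : ℕ × ℕ → Finset ℕ}
    (hT : IsSSVTQ lam mu n T) {c₀ : ℕ × ℕ} {v : ℕ} (hS0 : c₀ ∈ sCells lam mu)
    (hne' : T c₀ ≠ {v}) :
    IsSSVTQ lam mu n (Function.update T c₀ (T c₀ \ {v})) := by
  set T' := Function.update T c₀ (T c₀ \ {v}) with hT'
  have hsub : ∀ c, T' c ⊆ T c := by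
    intro c
    by_cases h : c = c₀
    · subst h; rw [hT', Function.update_self]; exact Finset.sdiff_subset
    · rw [hT', Function.update_of_ne h]
  constructor
  · intro c hc
    have := hT.support c hc
    exact Finset.subset_empty.mp (this ▸ hsub c)
  · intro c hc
    by_cases h : c = c₀
    · subst h
      rw [hT', Function.update_self]
      rcases Finset.eq_empty_or_nonempty (T c \ {v}) with he | hne
      · exfalso
        have h1 := Finset.sdiff_eq_empty_iff_subset.mp he
        rcases Finset.subset_singleton_iff.mp h1 with h2 | h2
        · exact Finset.not_nonempty_empty (h2 ▸ hT.cellNonempty c hc)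
        · exact hne' h2
      · exact hne
    · rw [hT', Function.update_of_ne h]; exact hT.cellNonempty c hc
  · intro c a ha; exact hT.inRange c a (hsub c ha)
  · intro i j h1 h2 a ha b hb; exact hT.rowWeak i j h1 h2 a (hsub _ ha) b (hsub _ hb)
  · intro i j h1 h2 a ha b hb; exact hT.colWeak i j h1 h2 a (hsub _ ha) b (hsub _ hb)
  · intro a hp i i' j ha hb; exact hT.colOnce a hp i i' j (hsub _ ha) (hsub _ hb)
  · intro a hp i j j' ha hb; exact hT.rowOnce a hp i j j' (hsub _ ha) (hsub _ hb)

lemma SQkey_lt_iff {M : ℕ} {c c' : ℕ × ℕ} (h : c.2 < M) (h' : c'.2 < M) :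
    M * c.1 + c.2 < M * c'.1 + c'.2 ↔ (c.1 < c'.1 ∨ (c.1 = c'.1 ∧ c.2 < c'.2)) := by
  rcases lt_trichotomy c.1 c'.1 with ht | ht | ht
  · have : M * (c.1 + 1) ≤ M * c'.1 := Nat.mul_le_mul_left M (by omega)
    have he : M * (c.1 + 1) = M * c.1 + M := by ring
    constructor
    · intro _; exact Or.inl ht
    · intro _; omega
  · have he : M * c.1 = M * c'.1 := by rw [ht]
    constructor
    · intro hk; exact Or.inr ⟨ht, by omega⟩
    · intro hk
      rcases hk with hk | hk
      · omega
      · omega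
  · have : M * (c'.1 + 1) ≤ M * c.1 := Nat.mul_le_mul_left M (by omega)
    have he : M * (c'.1 + 1) = M * c'.1 + M := by ring
    constructor
    · intro _; omega
    · intro hk
      rcases hk with hk | hk
      · omega
      · omega

lemma SQkey_inj {M : ℕ} {c c' : ℕ × ℕ} (h : c.2 < M) (h' : c'.2 < M)
    (he : M * c.1 + c.2 = M * c'.1 + c'.2) : c = c' := by
  have h1 : ¬ (M * c.1 + c.2 < M * c'.1 + c'.2) := by omega
  have h2 : ¬ (M * c'.1 + c'.2 < M * c.1 + c.2) := by omega
  rw [SQkey_lt_iff h h'] at h1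
  rw [SQkey_lt_iff h' h] at h2
  have : c.1 = c'.1 := by omega
  have : c.2 = c'.2 := by omega
  exact Prod.ext (by omega) this

/-- Deviation set: cells where `T` differs from the minimal tableau. -/
def SQdev (lam mu : List ℕ) (T : ℕ × ℕ → Finset ℕ) : Finset (ℕ × ℕ) :=
  (sCells lam mu).filter (fun c => T c ≠ {SQvm lam mu c})

/-- First (reading order) cell where `T` deviates from the minimal tableau. -/
noncomputable def SQc0 (lam mu : List ℕ) (T : ℕ × ℕ → Finset ℕ) : ℕ × ℕ :=
  if h : (SQdev lam mu T).Nonempty then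
    ((((SQdev lam mu T).image fun c => (lam.length + lam.foldr max 0 + 1) * c.1 + c.2).min'
        (h.image _)) / (lam.length + lam.foldr max 0 + 1),
     (((SQdev lam mu T).image fun c => (lam.length + lam.foldr max 0 + 1) * c.1 + c.2).min'
        (h.image _)) % (lam.length + lam.foldr max 0 + 1))
  else (0, 0)

lemma SQc0_spec {lam mu : List ℕ} {T : ℕ × ℕ → Finset ℕ} (h : (SQdev lam mu T).Nonempty) :
    SQc0 lam mu T ∈ SQdev lam mu T ∧
    ∀ c ∈ SQdev lam mu T,
      (lam.length + lam.foldr max 0 + 1) * (SQc0 lam mu T).1 + (SQc0 lam mu T).2 ≤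
      (lam.length + lam.foldr max 0 + 1) * c.1 + c.2 := by
  set M := lam.length + lam.foldr max 0 + 1 with hM
  have hkmem : (((SQdev lam mu T).image fun c => M * c.1 + c.2).min' (h.image _))
      ∈ (SQdev lam mu T).image fun c => M * c.1 + c.2 := Finset.min'_mem _ _
  obtain ⟨c', hc', hck⟩ := Finset.mem_image.mp hkmem
  have hc'2 : c'.2 < M := SQsnd_lt (Finset.mem_filter.mp hc').1
  have hM0 : 0 < M := by omega
  have hc0eq : SQc0 lam mu T = c' := by
    rw [SQc0, dif_pos h]
    simp only [← hM]
    have hdiv : (((SQdev lam mu T).image fun c => M * c.1 + c.2).min' (h.image _)) / M = c'.1 := by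
      rw [← hck, Nat.mul_add_div hM0, Nat.div_eq_of_lt hc'2]
      omega
    have hmod : (((SQdev lam mu T).image fun c => M * c.1 + c.2).min' (h.image _)) % M = c'.2 := by
      rw [← hck, Nat.mul_add_mod, Nat.mod_eq_of_lt hc'2]
    rw [hdiv, hmod]
  constructor
  · rw [hc0eq]; exact hc'
  · intro c hc
    rw [hc0eq, hck]
    exact Finset.min'_le _ _ (Finset.mem_image_of_mem _ hc)

lemma SQc0_mem {lam mu : List ℕ} {T : ℕ × ℕ → Finset ℕ} (h : (SQdev lam mu T).Nonempty) :
    SQc0 lam mu T ∈ SQdev lam mu T := (SQc0_spec h).1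

lemma SQc0_min {lam mu : List ℕ} {T : ℕ × ℕ → Finset ℕ} (h : (SQdev lam mu T).Nonempty) :
    ∀ c ∈ SQdev lam mu T,
      ¬(c.1 < (SQc0 lam mu T).1 ∨ (c.1 = (SQc0 lam mu T).1 ∧ c.2 < (SQc0 lam mu T).2)) := by
  intro c hc hlt
  have hc2 : c.2 < lam.length + lam.foldr max 0 + 1 := SQsnd_lt (Finset.mem_filter.mp hc).1
  have hc02 : (SQc0 lam mu T).2 < lam.length + lam.foldr max 0 + 1 :=
    SQsnd_lt (Finset.mem_filter.mp (SQc0_mem h)).1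
  have hklt := (SQkey_lt_iff (M := lam.length + lam.foldr max 0 + 1) hc2 hc02).mpr hlt
  have hk0 := (SQc0_spec h).2 c hc
  omega

lemma SQc0_unique {lam mu : List ℕ} {T : ℕ × ℕ → Finset ℕ} {c₀ : ℕ × ℕ}
    (hc : c₀ ∈ SQdev lam mu T)
    (hmin : ∀ c ∈ SQdev lam mu T,
      ¬(c.1 < c₀.1 ∨ (c.1 = c₀.1 ∧ c.2 < c₀.2))) : SQc0 lam mu T = c₀ := by
  have h : (SQdev lam mu T).Nonempty := ⟨c₀, hc⟩
  have h1 := SQc0_min h c₀ hc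
  have h2 := hmin _ (SQc0_mem h)
  rw [not_or] at h1 h2
  exact Prod.ext (by omega) (by omega)

/-- Toggle the minimal value at the first deviating cell. -/
noncomputable def SQtog (lam mu : List ℕ) (T : ℕ × ℕ → Finset ℕ) : ℕ × ℕ → Finset ℕ :=
  if (SQdev lam mu T).Nonempty then
    Function.update T (SQc0 lam mu T)
      (if SQvm lam mu (SQc0 lam mu T) ∈ T (SQc0 lam mu T) then
        T (SQc0 lam mu T) \ {SQvm lam mu (SQc0 lam mu T)}
      else insert (SQvm lam mu (SQc0 lam mu T)) (T (SQc0 lam mu T)))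
  else T

lemma SQdev_nonempty {lam mu : List ℕ} {n : ℕ} {T : ℕ × ℕ → Finset ℕ}
    (hT : IsSSVTQ lam mu n T) (hne : T ≠ SQTm lam mu) : (SQdev lam mu T).Nonempty := by
  rw [Finset.nonempty_iff_ne_empty]
  intro h
  apply hne
  funext c
  by_cases hc : c ∈ sCells lam mu
  · have h2 : c ∉ SQdev lam mu T := by rw [h]; exact Finset.notMem_empty c
    rw [SQdev, Finset.mem_filter] at h2
    push_neg at h2
    have := h2 hc
    simp only [SQTm, if_pos hc]
    tauto
  · rw [hT.support c hc]
    simp [SQTm, hc]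

lemma SQtog_spec {lam mu : List ℕ} {n : ℕ} {T : ℕ × ℕ → Finset ℕ}
    (hl : IsStrictPartition lam) (hm : IsStrictPartition mu)
    (hT : IsSSVTQ lam mu n T) (hne : T ≠ SQTm lam mu) :
    IsSSVTQ lam mu n (SQtog lam mu T) ∧ SQtog lam mu T ≠ SQTm lam mu ∧
    SQtog lam mu T ≠ T ∧ SQtog lam mu (SQtog lam mu T) = T := by
  have hdev := SQdev_nonempty hT hne
  obtain ⟨i₀, j₀, hc0⟩ : ∃ i j, SQc0 lam mu T = (i, j) := ⟨_, _, rfl⟩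
  have hc0dev : (i₀, j₀) ∈ SQdev lam mu T := hc0 ▸ SQc0_mem hdev
  have hS0 : (i₀, j₀) ∈ sCells lam mu := (Finset.mem_filter.mp hc0dev).1
  have hne0 : T (i₀, j₀) ≠ {SQvm lam mu (i₀, j₀)} := (Finset.mem_filter.mp hc0dev).2
  set v₀ := SQvm lam mu (i₀, j₀) with hv₀
  have hmin : ∀ i j, (i, j) ∈ sCells lam mu → (i < i₀ ∨ (i = i₀ ∧ j < j₀)) →
      T (i, j) = {SQvm lam mu (i, j)} := by
    intro i j hij hlt
    by_contra hne2
    have hd : (i, j) ∈ SQdev lam mu T := Finset.mem_filter.mpr ⟨hij, hne2⟩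
    have := SQc0_min hdev (i, j) hd
    rw [hc0] at this
    exact this hlt
  have hTmc0 : SQTm lam mu (i₀, j₀) = {v₀} := by simp [SQTm, hS0, hv₀]
  by_cases hvin : v₀ ∈ T (i₀, j₀)
  · -- remove case
    have htog : SQtog lam mu T = Function.update T (i₀, j₀) (T (i₀, j₀) \ {v₀}) := by
      rw [SQtog, if_pos hdev, hc0, ← hv₀, if_pos hvin]
    set T' := Function.update T (i₀, j₀) (T (i₀, j₀) \ {v₀}) with hT'
    have hT'c0 : T' (i₀, j₀) = T (i₀, j₀) \ {v₀} := Function.update_self _ _ _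
    have hvnotin : v₀ ∉ T' (i₀, j₀) := by rw [hT'c0]; simp
    have hvalid : IsSSVTQ lam mu n T' := SQremove_valid hT hS0 hne0
    have hT'ne : T' (i₀, j₀) ≠ {v₀} := by
      intro h
      rw [h] at hvnotin
      simp at hvnotin
    have hd' : (i₀, j₀) ∈ SQdev lam mu T' := Finset.mem_filter.mpr ⟨hS0, hT'ne⟩
    have hdev' : (SQdev lam mu T').Nonempty := ⟨_, hd'⟩
    have hc0' : SQc0 lam mu T' = (i₀, j₀) := by
      apply SQc0_unique hd'
      intro c hc hlt
      have hcne : c ≠ (i₀, j₀) := by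
        intro h; rw [h] at hlt; simp at hlt
      have hcS : c ∈ sCells lam mu := (Finset.mem_filter.mp hc).1
      have : T' c = T c := Function.update_of_ne hcne _ _
      have hmc : T c = {SQvm lam mu c} := by
        have := hmin c.1 c.2 (by simpa using hcS) (by simpa using hlt)
        simpa using this
      exact (Finset.mem_filter.mp hc).2 (by rw [‹T' c = T c›, hmc])
    rw [htog]
    refine ⟨hvalid, ?_, ?_, ?_⟩
    · intro h
      exact hT'ne (by rw [h, hTmc0])
    · intro h
      have hcf := congrFun h (i₀, j₀)
      rw [hT'c0] at hcf
      have h2 : v₀ ∈ T (i₀, j₀) \ {v₀} := by rw [hcf]; exact hvin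
      simp at h2
    · rw [SQtog, if_pos hdev', hc0', if_neg (show ¬ SQvm lam mu (i₀,j₀) ∈ T' (i₀,j₀) from hvnotin)]
      rw [hT'c0, ← hv₀]
      rw [Finset.sdiff_singleton_eq_erase, Finset.insert_erase hvin]
      rw [hT', Function.update_idem, Function.update_eq_self]
  · -- add case
    have htog : SQtog lam mu T = Function.update T (i₀, j₀) (insert v₀ (T (i₀, j₀))) := by
      rw [SQtog, if_pos hdev, hc0, ← hv₀, if_neg hvin]
    set T' := Function.update T (i₀, j₀) (insert v₀ (T (i₀, j₀))) with hT'
    have hT'c0 : T' (i₀, j₀) = insert v₀ (T (i₀, j₀)) := Function.update_self _ _ _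
    have hvalid : IsSSVTQ lam mu n T' := SQadd_valid hl hm hT hS0 hmin hvin
    obtain ⟨x, hx⟩ := hT.cellNonempty _ hS0
    have hxne : x ≠ v₀ := by intro h; rw [h] at hx; exact hvin hx
    have hT'ne : T' (i₀, j₀) ≠ {v₀} := by
      intro h
      have : x ∈ T' (i₀, j₀) := by rw [hT'c0]; exact Finset.mem_insert_of_mem hx
      rw [h] at this
      simp at this
      exact hxne this
    have hd' : (i₀, j₀) ∈ SQdev lam mu T' := Finset.mem_filter.mpr ⟨hS0, hT'ne⟩
    have hdev' : (SQdev lam mu T').Nonempty := ⟨_, hd'⟩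
    have hc0' : SQc0 lam mu T' = (i₀, j₀) := by
      apply SQc0_unique hd'
      intro c hc hlt
      have hcne : c ≠ (i₀, j₀) := by
        intro h; rw [h] at hlt; simp at hlt
      have hcS : c ∈ sCells lam mu := (Finset.mem_filter.mp hc).1
      have hTc : T' c = T c := Function.update_of_ne hcne _ _
      have hmc : T c = {SQvm lam mu c} := by
        have := hmin c.1 c.2 (by simpa using hcS) (by simpa using hlt)
        simpa using this
      exact (Finset.mem_filter.mp hc).2 (by rw [hTc, hmc])
    rw [htog]
    refine ⟨hvalid, ?_, ?_, ?_⟩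
    · intro h
      exact hT'ne (by rw [h, hTmc0])
    · intro h
      have hcf := congrFun h (i₀, j₀)
      rw [hT'c0] at hcf
      have h2 : v₀ ∈ T (i₀, j₀) := by rw [← hcf]; exact Finset.mem_insert_self v₀ _
      exact hvin h2
    · have hvin' : v₀ ∈ T' (i₀, j₀) := by rw [hT'c0]; exact Finset.mem_insert_self _ _
      rw [SQtog, if_pos hdev', hc0', if_pos (show SQvm lam mu (i₀,j₀) ∈ T' (i₀,j₀) from hvin')]
      rw [hT'c0, ← hv₀]
      rw [Finset.sdiff_singleton_eq_erase, Finset.erase_insert hvin]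
      rw [hT', Function.update_idem, Function.update_eq_self]

/-- for strict partitions `μ ⊆ λ`, the number of shifted skew
set-valued semistandard Q-tableaux of shape `λ/μ` in `n` letters is odd
(whenever there is at least one). -/
theorem skew_ssvtQ_card_odd (lam mu : List ℕ) (n : ℕ)
    (hl : IsStrictPartition lam) (hm : IsStrictPartition mu)
    (hsub : SubPartition mu lam)
    (hne : {T : ℕ × ℕ → Finset ℕ | IsSSVTQ lam mu n T}.Nonempty) :
    Odd {T : ℕ × ℕ → Finset ℕ | IsSSVTQ lam mu n T}.ncard := by
  classical
  obtain ⟨T₀, hT₀⟩ := hne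
  have h2n : ∀ c ∈ sCells lam mu, SQvm lam mu c ≤ 2 * n := fun c hc => SQvm_le hT₀ hc
  have hTm : IsSSVTQ lam mu n (SQTm lam mu) := SQTm_valid hl hm h2n
  have hfin : {T : ℕ × ℕ → Finset ℕ | IsSSVTQ lam mu n T}.Finite := by
    have hinj : Function.Injective
        (fun (T : {T : ℕ × ℕ → Finset ℕ // IsSSVTQ lam mu n T}) =>
          (fun c : {c // c ∈ sCells lam mu} =>
            (⟨T.1 c.1, Finset.mem_powerset.mpr fun a ha =>
              Finset.mem_Icc.mpr (T.2.inRange c.1 a ha)⟩ :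
              {A : Finset ℕ // A ∈ (Finset.Icc 1 (2 * n)).powerset}))) := by
      intro T U h
      apply Subtype.ext
      funext c
      by_cases hc : c ∈ sCells lam mu
      · exact congrArg Subtype.val (congrFun h ⟨c, hc⟩)
      · rw [T.2.support c hc, U.2.support c hc]
    have hfin2 : Finite {T : ℕ × ℕ → Finset ℕ // IsSSVTQ lam mu n T} :=
      Finite.of_injective _ hinj
    exact Set.finite_coe_iff.mp hfin2
  rw [Set.ncard_eq_toFinset_card _ hfin]
  have hTmF : SQTm lam mu ∈ hfin.toFinset := (Set.Finite.mem_toFinset hfin).mpr hTm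
  have hsum : ∑ _x ∈ hfin.toFinset.erase (SQTm lam mu), (1 : ZMod 2) = 0 := by
    refine Finset.sum_involution (fun T _ => SQtog lam mu T) ?_ ?_ ?_ ?_
    · intro a ha; decide
    · intro T hT _
      obtain ⟨hne', hTF⟩ := Finset.mem_erase.mp hT
      have hTq : IsSSVTQ lam mu n T := (Set.Finite.mem_toFinset hfin).mp hTF
      exact (SQtog_spec hl hm hTq hne').2.2.1
    · intro T hT
      obtain ⟨hne', hTF⟩ := Finset.mem_erase.mp hT
      have hTq : IsSSVTQ lam mu n T := (Set.Finite.mem_toFinset hfin).mp hTF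
      have hspec := SQtog_spec hl hm hTq hne'
      exact Finset.mem_erase.mpr ⟨hspec.2.1, (Set.Finite.mem_toFinset hfin).mpr hspec.1⟩
    · intro T hT
      obtain ⟨hne', hTF⟩ := Finset.mem_erase.mp hT
      have hTq : IsSSVTQ lam mu n T := (Set.Finite.mem_toFinset hfin).mp hTF
      exact (SQtog_spec hl hm hTq hne').2.2.2
  rw [Finset.sum_const, nsmul_eq_mul, mul_one] at hsum
  have hdvd : 2 ∣ (hfin.toFinset.erase (SQTm lam mu)).card :=
    (ZMod.natCast_eq_zero_iff _ 2).mp hsum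
  have hcard : (hfin.toFinset.erase (SQTm lam mu)).card + 1 = hfin.toFinset.card :=
    Finset.card_erase_add_one hTmF
  obtain ⟨k, hk⟩ := hdvd
  exact ⟨k, by omega⟩
end
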